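/- arXiv:1706.02801 — 6 statements merged into one kernel-verified Lean document; each statement's English description precedes it below -/
import Mathlib

section
/- Let S and S₀ be metric spaces with their Borel σ-algebras, μ an inner regular (with respect to compact sets) Borel probability measure on S, μ₀ a Borel measure on S₀, and h : S → S₀ a Borel-measurable map with μ₀ = μ ∘ h⁻¹ (i.e., h is measure-preserving). Then for every Borel set A ⊆ S there exists a Borel set D ⊆ S₀ with D ⊆ h(A) and μ₀(D) ≥ μ(A). -/
/-!
By Lusin's theorem, `A` is exhausted up to a `μ`-null set by countably many compact sets `Kₙ`
on which `h` is continuous. Each `h '' Kₙ` is then compact, so `D = ⋃ₙ h '' Kₙ` is a Borel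
subset of `h '' A`, and `μ A ≤ μ (⋃ₙ Kₙ) ≤ μ (h ⁻¹' D) = μ₀ D`.
-/

open MeasureTheory Set TopologicalSpace
open scoped ENNReal

section Lusin

variable {α β : Type*} [TopologicalSpace α] [T2Space α] [MeasurableSpace α]
  [OpensMeasurableSpace α] {μ : Measure α} [μ.InnerRegularCompactLTTop] {A : Set α}
  {ε : ℝ≥0∞}

theorem MeasurableSet.exists_isCompact_sdiff_lt_isOpen_inter_eq (hA : MeasurableSet A)
    (hμA : μ A ≠ ∞) {E : Set α} (hE : MeasurableSet E) (hε : ε ≠ 0) :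
    ∃ K ⊆ A, IsCompact K ∧ μ (A \ K) < ε ∧ ∃ U, IsOpen U ∧ E ∩ K = U ∩ K := by
  have hε₂ : ε / 2 ≠ 0 := (ENNReal.half_pos hε).ne'
  obtain ⟨K₁, hK₁, hK₁c, hμK₁⟩ := (hA.inter hE).exists_isCompact_sdiff_lt
    (measure_ne_top_of_subset inter_subset_left hμA) hε₂
  obtain ⟨K₂, hK₂, hK₂c, hμK₂⟩ := (hA.diff hE).exists_isCompact_sdiff_lt
    (measure_ne_top_of_subset sdiff_subset hμA) hε₂
  -- `K₁ ⊆ E` and `K₂ ⊆ Eᶜ` are disjoint compacts, so `E` is clopen in `K₁ ∪ K₂`.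
  refine ⟨K₁ ∪ K₂, union_subset (hK₁.trans inter_subset_left) (hK₂.trans sdiff_subset),
    hK₁c.union hK₂c, ?_, K₂ᶜ, hK₂c.isClosed.isOpen_compl, ?_⟩
  · calc μ (A \ (K₁ ∪ K₂)) ≤ μ ((A ∩ E) \ K₁ ∪ (A \ E) \ K₂) := by
          refine measure_mono fun x hx => ?_
          by_cases hxE : x ∈ E
          · exact Or.inl ⟨⟨hx.1, hxE⟩, fun h => hx.2 (Or.inl h)⟩
          · exact Or.inr ⟨⟨hx.1, hxE⟩, fun h => hx.2 (Or.inr h)⟩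
      _ ≤ μ ((A ∩ E) \ K₁) + μ ((A \ E) \ K₂) := measure_union_le _ _
      _ < ε / 2 + ε / 2 := ENNReal.add_lt_add hμK₁ hμK₂
      _ = ε := ENNReal.add_halves ε
  · ext x
    have h₁ := @hK₁ x
    have h₂ := @hK₂ x
    simp only [mem_inter_iff, mem_sdiff, mem_union, mem_compl_iff] at h₁ h₂ ⊢
    tauto

theorem MeasurableSet.exists_isCompact_sdiff_lt_forall_isOpen_inter_eq {ι : Type*} [Countable ι]
    (hA : MeasurableSet A) (hμA : μ A ≠ ∞) {E : ι → Set α} (hE : ∀ i, MeasurableSet (E i))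
    (hε : ε ≠ 0) :
    ∃ K ⊆ A, IsCompact K ∧ μ (A \ K) < ε ∧ ∀ i, ∃ U, IsOpen U ∧ E i ∩ K = U ∩ K := by
  rcases isEmpty_or_nonempty ι with _ | ⟨⟨i₀⟩⟩
  · obtain ⟨K, hKA, hKc, hμK⟩ := hA.exists_isCompact_sdiff_lt hμA hε
    exact ⟨K, hKA, hKc, hμK, isEmptyElim⟩
  obtain ⟨δ, hδ, hδε⟩ := ENNReal.exists_pos_sum_of_countable' hε ι
  choose K hKA hKc hμK U hU hEU using fun i =>
    hA.exists_isCompact_sdiff_lt_isOpen_inter_eq hμA (hE i) (hδ i).ne'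
  have hKi : ∀ i, ⋂ j, K j ⊆ K i := iInter_subset K
  refine ⟨⋂ i, K i, (hKi i₀).trans (hKA i₀),
    (hKc i₀).of_isClosed_subset (isClosed_iInter fun i => (hKc i).isClosed) (hKi i₀), ?_,
    fun i => ⟨U i, hU i, ?_⟩⟩
  · calc μ (A \ ⋂ i, K i) = μ (⋃ i, A \ K i) := by rw [sdiff_iInter]
      _ ≤ ∑' i, μ (A \ K i) := measure_iUnion_le _
      _ ≤ ∑' i, δ i := ENNReal.tsum_le_tsum fun i => (hμK i).le
      _ < ε := hδε
  · calc E i ∩ ⋂ j, K j = E i ∩ K i ∩ ⋂ j, K j := by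
          rw [inter_assoc, inter_eq_right.2 (hKi i)]
      _ = U i ∩ ⋂ j, K j := by rw [hEU i, inter_assoc, inter_eq_right.2 (hKi i)]

variable [TopologicalSpace β] [SecondCountableTopology β] [MeasurableSpace β]
  [OpensMeasurableSpace β] {f : α → β}

theorem Measurable.exists_isCompact_sdiff_lt_continuousOn (hf : Measurable f)
    (hA : MeasurableSet A) (hμA : μ A ≠ ∞) (hε : ε ≠ 0) :
    ∃ K ⊆ A, IsCompact K ∧ μ (A \ K) < ε ∧ ContinuousOn f K := by
  obtain ⟨B, hBc, -, hB⟩ := exists_countable_basis β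
  have := hBc.to_subtype
  obtain ⟨K, hKA, hKc, hμK, hK⟩ := hA.exists_isCompact_sdiff_lt_forall_isOpen_inter_eq hμA
    (E := fun V : B => f ⁻¹' V) (fun V => hf (hB.isOpen V.2).measurableSet) hε
  exact ⟨K, hKA, hKc, hμK, hB.continuousOn_iff.2 fun V hV => hK ⟨V, hV⟩⟩

theorem Measurable.exists_seq_isCompact_continuousOn_ae_le_iUnion (hf : Measurable f)
    (hA : MeasurableSet A) (hμA : μ A ≠ ∞) :
    ∃ K : ℕ → Set α, (∀ n, K n ⊆ A ∧ IsCompact (K n) ∧ ContinuousOn f (K n)) ∧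
      A ≤ᵐ[μ] ⋃ n, K n := by
  choose K hKA hKc hμK hKf using fun n : ℕ =>
    hf.exists_isCompact_sdiff_lt_continuousOn hA hμA
      (ENNReal.inv_ne_zero.2 (ENNReal.natCast_ne_top n))
  refine ⟨K, fun n => ⟨hKA n, hKc n, hKf n⟩, ae_le_set.2 ?_⟩
  by_contra hpos
  obtain ⟨n, hn⟩ := ENNReal.exists_inv_nat_lt hpos
  have hle : μ (A \ ⋃ n, K n) ≤ μ (A \ K n) :=
    measure_mono (sdiff_subset_sdiff_right (subset_iUnion K n))
  exact lt_asymm (hle.trans_lt (hμK n)) hn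

end Lusin

theorem exists_borel_subset_image_of_measurePreserving_general
    {S S₀ : Type*} [MetricSpace S]
    [MetricSpace S₀] [TopologicalSpace.SeparableSpace S₀]
    [MeasurableSpace S] [BorelSpace S] [MeasurableSpace S₀] [BorelSpace S₀]
    (μ : Measure S) [IsProbabilityMeasure μ]
    (hreg : μ.InnerRegularWRT IsCompact MeasurableSet)
    (μ₀ : Measure S₀)
    (h : S → S₀) (hm : Measurable h)
    (hpres : ∀ B : Set S₀, MeasurableSet B → μ₀ B = μ (h ⁻¹' B)) :
    ∀ A : Set S, MeasurableSet A →
      ∃ D : Set S₀, MeasurableSet D ∧ D ⊆ h '' A ∧ μ A ≤ μ₀ D := by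
  intro A hA
  have : μ.InnerRegularCompactLTTop := ⟨hreg.mono (fun _ hs => hs.1) fun _ => id⟩
  have := UniformSpace.secondCountable_of_separable S₀
  obtain ⟨K, hK, hAK⟩ := hm.exists_seq_isCompact_continuousOn_ae_le_iUnion hA (measure_ne_top μ A)
  have hDc : ∀ n, IsCompact (h '' K n) := fun n => (hK n).2.1.image_of_continuousOn (hK n).2.2
  have hD : MeasurableSet (⋃ n, h '' K n) := .iUnion fun n => (hDc n).isClosed.measurableSet
  refine ⟨⋃ n, h '' K n, hD, iUnion_subset fun n => image_mono (hK n).1, ?_⟩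
  calc μ A ≤ μ (⋃ n, K n) := measure_mono_ae hAK
    _ ≤ μ (h ⁻¹' ⋃ n, h '' K n) := measure_mono <| iUnion_subset fun n =>
        (subset_preimage_image h (K n)).trans (preimage_mono (subset_iUnion (fun n => h '' K n) n))
    _ = μ₀ (⋃ n, h '' K n) := (hpres _ hD).symm

/-- Lemma 2 of the paper: if `h : S → S₀` is a Borel measure-preserving map between
metric spaces, `μ` an inner regular (w.r.t. compact sets) Borel probability measure
on `S`, then for every Borel `A ⊆ S` there is a Borel `D ⊆ h '' A` with `μ₀ D ≥ μ A`. -/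
theorem exists_borel_subset_image_of_measurePreserving
    {S S₀ : Type*} [MetricSpace S] [TopologicalSpace.SeparableSpace S]
    [MetricSpace S₀] [TopologicalSpace.SeparableSpace S₀]
    [MeasurableSpace S] [BorelSpace S] [MeasurableSpace S₀] [BorelSpace S₀]
    (μ : Measure S) [IsProbabilityMeasure μ]
    (hreg : μ.InnerRegularWRT IsCompact MeasurableSet)
    (μ₀ : Measure S₀)
    (h : S → S₀) (hm : Measurable h)
    (hpres : ∀ B : Set S₀, MeasurableSet B → μ₀ B = μ (h ⁻¹' B)) :
    ∀ A : Set S, MeasurableSet A →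
      ∃ D : Set S₀, MeasurableSet D ∧ D ⊆ h '' A ∧ μ A ≤ μ₀ D :=
  exists_borel_subset_image_of_measurePreserving_general μ hreg μ₀ h hm hpres
end

section
/- Let 𝔄 be an algebra (Boolean algebra of sets) of subsets of a set S, and let 𝔄₁, 𝔄₂ be subalgebras of 𝔄. Let ν₁ : 𝔄₁ → [0,1] and ν₂ : 𝔄₂ → [0,1] be finitely additive measures with ν₁(S) = ν₂(S) = 1. Suppose that ν₁(A₁) + ν₂(A₂) ≤ 1 whenever A₁ ∈ 𝔄₁, A₂ ∈ 𝔄₂ and A₁ ∩ A₂ = ∅. Then there exists a finitely additive measure ν : 𝔄 → [0,1] extending both ν₁ and ν₂. -/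
/-- An algebra (Boolean algebra) of subsets of `S`. -/
def IsSetAlg {S : Type*} (𝔄 : Set (Set S)) : Prop :=
  ∅ ∈ 𝔄 ∧ (∀ A ∈ 𝔄, Aᶜ ∈ 𝔄) ∧ (∀ A ∈ 𝔄, ∀ B ∈ 𝔄, A ∪ B ∈ 𝔄)

/-- A finitely additive measure on an algebra `𝔄`, with values in `[0,1]`. -/
def IsFinAdd {S : Type*} (𝔄 : Set (Set S)) (ν : Set S → ℝ) : Prop :=
  ν ∅ = 0 ∧ (∀ A ∈ 𝔄, 0 ≤ ν A ∧ ν A ≤ 1) ∧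
    ∀ A ∈ 𝔄, ∀ B ∈ 𝔄, Disjoint A B → ν (A ∪ B) = ν A + ν B

/-!
A positive linear functional `g` on the bounded functions `S → ℝ` with `g 1 = 1` yields the
finitely additive probability `X ↦ g 1_X` on all subsets of `S`. Write `∫ φ dν` for `∑ cᵢ ν Aᵢ`
when `φ = ∑ cᵢ 1_{Aᵢ}`. By the M. Riesz extension theorem there is a positive `g` with
`g (φ + ψ) = ∫ φ dν₁ + ∫ ψ dν₂` for all `𝔄₁`-simple `φ` and `𝔄₂`-simple `ψ` as soon as `ψ ≤ φ`
implies `∫ ψ dν₂ ≤ ∫ φ dν₁` (which also makes `∫` independent of the representation). For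
indicators this is the hypothesis, in the form `W ⊆ U → ν₂ W ≤ ν₁ U`; it passes to simple
functions superlevel set by superlevel set through the layer-cake formula
`∫ φ dν = ∫_{-C}^{C} ν {φ ≥ t} dt - C` for `|φ| ≤ C`. (Fremlin, Measure Theory, 457C.)
-/

open Finset MeasureTheory

namespace IsSetAlg

variable {S : Type*} {𝔅 : Set (Set S)}

theorem compl_mem (h : IsSetAlg 𝔅) {A : Set S} (hA : A ∈ 𝔅) : Aᶜ ∈ 𝔅 :=
  h.2.1 A hA

theorem univ_mem (h : IsSetAlg 𝔅) : Set.univ ∈ 𝔅 := by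
  simpa using h.compl_mem h.1

theorem biUnion_mem (h : IsSetAlg 𝔅) {ι : Type*} (s : Finset ι) {f : ι → Set S}
    (hf : ∀ i ∈ s, f i ∈ 𝔅) : ⋃ i ∈ s, f i ∈ 𝔅 := by
  classical
  induction s using Finset.induction_on with
  | empty => simpa using h.1
  | insert a s _ ih =>
    rw [set_biUnion_insert]
    exact h.2.2 _ (hf a (mem_insert_self a s)) _ (ih fun i hi => hf i (mem_insert_of_mem hi))

theorem biInter_mem (h : IsSetAlg 𝔅) {ι : Type*} (s : Finset ι) {f : ι → Set S}
    (hf : ∀ i ∈ s, f i ∈ 𝔅) : ⋂ i ∈ s, f i ∈ 𝔅 := by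
  simpa [Set.compl_iUnion₂] using h.compl_mem (h.biUnion_mem s fun i hi => h.compl_mem (hf i hi))

end IsSetAlg

namespace IsFinAdd

variable {S : Type*} {𝔅 : Set (Set S)} {ν : Set S → ℝ}

theorem measure_biUnion_finset (h𝔅 : IsSetAlg 𝔅) (hν : IsFinAdd 𝔅 ν) {ι : Type*} (s : Finset ι)
    {f : ι → Set S} (hf : ∀ i ∈ s, f i ∈ 𝔅) (hd : (s : Set ι).PairwiseDisjoint f) :
    ν (⋃ i ∈ s, f i) = ∑ i ∈ s, ν (f i) := by
  classical
  induction s using Finset.induction_on with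
  | empty => simpa using hν.1
  | insert a s ha ih =>
    rw [coe_insert, Set.pairwiseDisjoint_insert_of_notMem (mem_coe.not.2 ha)] at hd
    rw [set_biUnion_insert, sum_insert ha, ← ih (fun i hi => hf i (mem_insert_of_mem hi)) hd.1]
    exact hν.2.2 _ (hf a (mem_insert_self a s)) _
      (h𝔅.biUnion_mem s fun i hi => hf i (mem_insert_of_mem hi))
      (Set.disjoint_iUnion₂_right.2 hd.2)

theorem measure_compl (h𝔅 : IsSetAlg 𝔅) (hν : IsFinAdd 𝔅 ν) (htot : ν Set.univ = 1) {A : Set S}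
    (hA : A ∈ 𝔅) : ν Aᶜ = 1 - ν A := by
  have := hν.2.2 A hA Aᶜ (h𝔅.compl_mem hA) disjoint_compl_right
  rw [Set.union_compl_self, htot] at this
  linarith

end IsFinAdd

theorem sum_filter_le_eq_sum_indicator {α : Type*} (P : Finset α) (p v : α → ℝ) (t : ℝ) :
    ∑ a ∈ P with t ≤ v a, p a = ∑ a ∈ P, {s | s ≤ v a}.indicator (fun _ => p a) t := by
  simp [sum_filter, Set.indicator_apply]

theorem intervalIntegrable_indicator_le (c v a b : ℝ) :
    IntervalIntegrable ({s | s ≤ v}.indicator fun _ => c) volume a b :=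
  intervalIntegrable_iff.2 ((intervalIntegrable_iff.1 intervalIntegrable_const).indicator
    measurableSet_Iic)

theorem intervalIntegrable_sum_filter_le {α : Type*} (P : Finset α) (p v : α → ℝ) (a b : ℝ) :
    IntervalIntegrable (fun t => ∑ i ∈ P with t ≤ v i, p i) volume a b := by
  simp_rw [sum_filter_le_eq_sum_indicator, ← Finset.sum_apply]
  exact IntervalIntegrable.sum P fun i _ => intervalIntegrable_indicator_le _ _ _ _

theorem integral_sum_filter_le {α : Type*} (P : Finset α) (p v : α → ℝ) {C : ℝ}
    (hC : ∀ a ∈ P, |v a| ≤ C) :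
    ∫ t in (-C)..C, ∑ a ∈ P with t ≤ v a, p a = ∑ a ∈ P, p a * (v a + C) := by
  simp_rw [sum_filter_le_eq_sum_indicator]
  rw [intervalIntegral.integral_finsetSum fun i _ => intervalIntegrable_indicator_le _ _ _ _]
  refine sum_congr rfl fun a ha => ?_
  rw [intervalIntegral.integral_indicator (Set.mem_Icc.2 (abs_le.1 (hC a ha)))]
  simp [mul_comm]

def IsPartitionMap {S α : Type*} (𝔅 : Set (Set S)) (g : S → α) (P : Finset α) : Prop :=
  (∀ x, g x ∈ P) ∧ ∀ a ∈ P, g ⁻¹' {a} ∈ 𝔅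

namespace IsPartitionMap

variable {S α : Type*} {𝔅 : Set (Set S)} {ν : Set S → ℝ} {g : S → α} {P : Finset α}

theorem setOf_eq_biUnion (hg : IsPartitionMap 𝔅 g P) (q : α → Prop) [DecidablePred q] :
    {x | q (g x)} = ⋃ a ∈ P.filter q, g ⁻¹' {a} := by
  ext x
  simp [hg.1 x]

theorem setOf_mem (hg : IsPartitionMap 𝔅 g P) (h𝔅 : IsSetAlg 𝔅) (q : α → Prop)
    [DecidablePred q] : {x | q (g x)} ∈ 𝔅 := by
  rw [hg.setOf_eq_biUnion q]
  exact h𝔅.biUnion_mem _ fun a ha => hg.2 a (mem_filter.1 ha).1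

theorem measure_setOf (hg : IsPartitionMap 𝔅 g P) (h𝔅 : IsSetAlg 𝔅) (hν : IsFinAdd 𝔅 ν)
    (q : α → Prop) [DecidablePred q] : ν {x | q (g x)} = ∑ a ∈ P with q a, ν (g ⁻¹' {a}) := by
  rw [hg.setOf_eq_biUnion q]
  exact hν.measure_biUnion_finset h𝔅 _ (fun a ha => hg.2 a (mem_filter.1 ha).1)
    (Set.pairwiseDisjoint_fiber g _)

theorem sum_measure_fiber (hg : IsPartitionMap 𝔅 g P) (h𝔅 : IsSetAlg 𝔅) (hν : IsFinAdd 𝔅 ν)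
    (htot : ν Set.univ = 1) : ∑ a ∈ P, ν (g ⁻¹' {a}) = 1 := by
  simpa using (hg.measure_setOf h𝔅 hν fun _ => True).symm.trans htot

theorem intervalIntegrable_measure_superlevel (hg : IsPartitionMap 𝔅 g P) (h𝔅 : IsSetAlg 𝔅)
    (hν : IsFinAdd 𝔅 ν) (v : α → ℝ) (a b : ℝ) :
    IntervalIntegrable (fun t => ν {x | t ≤ v (g x)}) volume a b := by
  have hlevel (t : ℝ) := hg.measure_setOf h𝔅 hν fun y => t ≤ v y
  simp_rw [hlevel]
  exact intervalIntegrable_sum_filter_le P _ v a b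

theorem integral_measure_superlevel (hg : IsPartitionMap 𝔅 g P) (h𝔅 : IsSetAlg 𝔅)
    (hν : IsFinAdd 𝔅 ν) (htot : ν Set.univ = 1) (v : α → ℝ) {C : ℝ}
    (hC : ∀ a ∈ P, |v a| ≤ C) :
    ∫ t in (-C)..C, ν {x | t ≤ v (g x)} = ∑ a ∈ P, v a * ν (g ⁻¹' {a}) + C := by
  have hlevel (t : ℝ) := hg.measure_setOf h𝔅 hν fun a => t ≤ v a
  simp_rw [hlevel, integral_sum_filter_le P _ v hC, mul_add, sum_add_distrib, ← sum_mul,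
    hg.sum_measure_fiber h𝔅 hν htot, one_mul, mul_comm]

variable {β : Type*} {𝔄₁ 𝔄₂ : Set (Set S)} {ν₁ ν₂ : Set S → ℝ} {g₁ : S → α} {P₁ : Finset α}
  {g₂ : S → β} {P₂ : Finset β}

theorem sum_mul_measure_fiber_le (h𝔄₁ : IsSetAlg 𝔄₁) (h𝔄₂ : IsSetAlg 𝔄₂)
    (hν₁ : IsFinAdd 𝔄₁ ν₁) (hν₂ : IsFinAdd 𝔄₂ ν₂) (htot₁ : ν₁ Set.univ = 1)
    (htot₂ : ν₂ Set.univ = 1) (hmono : ∀ U ∈ 𝔄₁, ∀ W ∈ 𝔄₂, W ⊆ U → ν₂ W ≤ ν₁ U)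
    (hg₁ : IsPartitionMap 𝔄₁ g₁ P₁) (hg₂ : IsPartitionMap 𝔄₂ g₂ P₂) (v : α → ℝ) (w : β → ℝ)
    (hle : ∀ x, w (g₂ x) ≤ v (g₁ x)) :
    ∑ b ∈ P₂, w b * ν₂ (g₂ ⁻¹' {b}) ≤ ∑ a ∈ P₁, v a * ν₁ (g₁ ⁻¹' {a}) := by
  set C := ∑ a ∈ P₁, |v a| + ∑ b ∈ P₂, |w b|
  have hsum₁ : 0 ≤ ∑ a ∈ P₁, |v a| := sum_nonneg fun _ _ => abs_nonneg _
  have hsum₂ : 0 ≤ ∑ b ∈ P₂, |w b| := sum_nonneg fun _ _ => abs_nonneg _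
  have hv : ∀ a ∈ P₁, |v a| ≤ C := fun a ha =>
    (single_le_sum (fun _ _ => abs_nonneg _) ha).trans (le_add_of_nonneg_right hsum₂)
  have hw : ∀ b ∈ P₂, |w b| ≤ C := fun b hb =>
    (single_le_sum (fun _ _ => abs_nonneg _) hb).trans (le_add_of_nonneg_left hsum₁)
  have hlevel : ∀ t, ν₂ {x | t ≤ w (g₂ x)} ≤ ν₁ {x | t ≤ v (g₁ x)} := fun t =>
    hmono _ (hg₁.setOf_mem h𝔄₁ (t ≤ v ·)) _ (hg₂.setOf_mem h𝔄₂ (t ≤ w ·)) fun x hx =>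
      le_trans hx (hle x)
  have := intervalIntegral.integral_mono_on (show -C ≤ C by linarith)
    (hg₂.intervalIntegrable_measure_superlevel h𝔄₂ hν₂ w (-C) C)
    (hg₁.intervalIntegrable_measure_superlevel h𝔄₁ hν₁ v (-C) C) fun t _ => hlevel t
  rw [hg₁.integral_measure_superlevel h𝔄₁ hν₁ htot₁ v hv,
    hg₂.integral_measure_superlevel h𝔄₂ hν₂ htot₂ w hw] at this
  linarith

end IsPartitionMap

section SimpleFunction

variable {S ι : Type*} {𝔅 : Set (Set S)} {ν : Set S → ℝ}

theorem exists_partitionMap_linearCombination (h𝔅 : IsSetAlg 𝔅) (hν : IsFinAdd 𝔅 ν)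
    (c : ι →₀ ℝ) (A : ι → Set S) (hA : ∀ i, A i ∈ 𝔅) :
    ∃ (g : S → Finset ι) (P : Finset (Finset ι)), IsPartitionMap 𝔅 g P ∧
      (∀ x, Finsupp.linearCombination ℝ (fun i => (A i).indicator 1) c x = ∑ i ∈ g x, c i) ∧
      Finsupp.linearCombination ℝ (fun i => ν (A i)) c =
        ∑ J ∈ P, (∑ i ∈ J, c i) * ν (g ⁻¹' {J}) := by
  classical
  let g : S → Finset ι := fun x => {i ∈ c.support | x ∈ A i}
  have hfiber : ∀ J ∈ c.support.powerset,
      g ⁻¹' {J} = ⋂ i ∈ c.support, if i ∈ J then A i else (A i)ᶜ := by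
    intro J hJ
    ext x
    rw [mem_powerset] at hJ
    simp only [Set.mem_preimage, Set.mem_singleton_iff, Finset.ext_iff, mem_filter, g,
      Set.mem_iInter₂]
    refine ⟨fun h i hi => ?_, fun h i => ?_⟩
    · split_ifs with hiJ
      · exact ((h i).2 hiJ).2
      · exact fun hx => hiJ ((h i).1 ⟨hi, hx⟩)
    · by_cases hi : i ∈ c.support
      · have := h i hi
        split_ifs at this with hiJ
        · simp [hi, hiJ, this]
        · simpa [hi, hiJ] using this
      · simpa [hi] using fun hiJ => hi (hJ hiJ)
  have hg : IsPartitionMap 𝔅 g c.support.powerset :=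
    ⟨fun x => mem_powerset.2 (filter_subset _ _), fun J hJ => by
      rw [hfiber J hJ]
      exact h𝔅.biInter_mem _ fun i _ => by split_ifs <;> [exact hA i; exact h𝔅.compl_mem (hA i)]⟩
  refine ⟨g, _, hg, fun x => ?_, ?_⟩
  · simp [Finsupp.linearCombination_apply, Finsupp.sum, g, sum_filter, Set.indicator_apply]
  · have hA' : ∀ i ∈ c.support, A i = {x | i ∈ g x} := fun i hi => by
      ext x; simp [g, hi]
    rw [Finsupp.linearCombination_apply, Finsupp.sum]
    calc ∑ i ∈ c.support, c i • ν (A i)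
        = ∑ i ∈ c.support, ∑ J ∈ c.support.powerset with i ∈ J, c i * ν (g ⁻¹' {J}) :=
          sum_congr rfl fun i hi => by
            rw [hA' i hi, hg.measure_setOf h𝔅 hν (i ∈ ·), smul_eq_mul, mul_sum]
      _ = ∑ J ∈ c.support.powerset, ∑ i ∈ J, c i * ν (g ⁻¹' {J}) :=
          sum_comm' (fun i J => by simp only [mem_filter, mem_powerset]; grind)
      _ = _ := sum_congr rfl fun J _ => (sum_mul _ _ _).symm

variable {κ : Type*} {𝔄₁ 𝔄₂ : Set (Set S)} {ν₁ ν₂ : Set S → ℝ}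

theorem linearCombination_le_of_indicator_le (h𝔄₁ : IsSetAlg 𝔄₁) (h𝔄₂ : IsSetAlg 𝔄₂)
    (hν₁ : IsFinAdd 𝔄₁ ν₁) (hν₂ : IsFinAdd 𝔄₂ ν₂) (htot₁ : ν₁ Set.univ = 1)
    (htot₂ : ν₂ Set.univ = 1) (hmono : ∀ U ∈ 𝔄₁, ∀ W ∈ 𝔄₂, W ⊆ U → ν₂ W ≤ ν₁ U)
    (c : ι →₀ ℝ) (A : ι → Set S) (hA : ∀ i, A i ∈ 𝔄₁)
    (d : κ →₀ ℝ) (B : κ → Set S) (hB : ∀ j, B j ∈ 𝔄₂)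
    (hle : Finsupp.linearCombination ℝ (fun j => (B j).indicator (1 : S → ℝ)) d ≤
      Finsupp.linearCombination ℝ (fun i => (A i).indicator 1) c) :
    Finsupp.linearCombination ℝ (fun j => ν₂ (B j)) d ≤
      Finsupp.linearCombination ℝ (fun i => ν₁ (A i)) c := by
  obtain ⟨g₁, P₁, hg₁, hφ, hI₁⟩ := exists_partitionMap_linearCombination h𝔄₁ hν₁ c A hA
  obtain ⟨g₂, P₂, hg₂, hψ, hI₂⟩ := exists_partitionMap_linearCombination h𝔄₂ hν₂ d B hB
  rw [hI₁, hI₂]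
  exact hg₁.sum_mul_measure_fiber_le h𝔄₁ h𝔄₂ hν₁ hν₂ htot₁ htot₂ hmono hg₂ _ _ fun x => by
    simpa only [hφ, hψ] using hle x

end SimpleFunction

theorem exists_nonneg_functional_comp_eq {V E : Type*} [AddCommGroup V] [Module ℝ V]
    [AddCommGroup E] [Module ℝ E] (s : PointedCone ℝ E) (T : V →ₗ[ℝ] E) (L : V →ₗ[ℝ] ℝ)
    (hpos : ∀ v, T v ∈ s → 0 ≤ L v) (hdense : ∀ y, ∃ v, T v + y ∈ s) :
    ∃ g : E →ₗ[ℝ] ℝ, (∀ v, g (T v) = L v) ∧ ∀ x ∈ s, 0 ≤ g x := by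
  have hker : LinearMap.ker T ≤ LinearMap.ker L := fun v hv => by
    have hv : T v = 0 := hv
    have h₁ := hpos v (by rw [hv]; exact s.zero_mem)
    have h₂ := hpos (-v) (by rw [map_neg, hv, neg_zero]; exact s.zero_mem)
    rw [map_neg] at h₂
    exact le_antisymm (by linarith) h₁
  let f : LinearMap.range T →ₗ[ℝ] ℝ :=
    (LinearMap.ker T).liftQ L hker ∘ₗ T.quotKerEquivRange.symm
  have hf : ∀ v, f ⟨T v, LinearMap.mem_range_self T v⟩ = L v := fun v => by
    simp [f, LinearMap.quotKerEquivRange_symm_apply_image]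
  obtain ⟨g, hgf, hgs⟩ := riesz_extension s ⟨LinearMap.range T, f⟩
    (fun ⟨_, v, rfl⟩ hv => by simpa only [LinearPMap.mk_apply, hf] using hpos v hv)
    (fun y => let ⟨v, hv⟩ := hdense y; ⟨⟨T v, LinearMap.mem_range_self T v⟩, hv⟩)
  exact ⟨g, fun v => (hgf ⟨T v, LinearMap.mem_range_self T v⟩).trans (hf v), hgs⟩

section BoundedFunctions

variable {S : Type*}

variable (S) in
def boundedFunctions : Submodule ℝ (S → ℝ) where
  carrier := {f | ∃ M, ∀ x, |f x| ≤ M}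
  add_mem' := fun ⟨M, hM⟩ ⟨M', hM'⟩ =>
    ⟨M + M', fun x => (abs_add_le _ _).trans (add_le_add (hM x) (hM' x))⟩
  zero_mem' := ⟨0, fun x => by simp⟩
  smul_mem' t _ := fun ⟨M, hM⟩ =>
    ⟨|t| * M, fun x => by simpa [abs_mul] using mul_le_mul_of_nonneg_left (hM x) (abs_nonneg t)⟩

noncomputable def boundedIndicator (X : Set S) : boundedFunctions S :=
  ⟨X.indicator 1, 1, fun x => by by_cases hx : x ∈ X <;> simp [hx]⟩

theorem isFinAdd_comp_boundedIndicator (g : boundedFunctions S →ₗ[ℝ] ℝ)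
    (hg : ∀ f : boundedFunctions S, 0 ≤ (f : S → ℝ) → 0 ≤ g f)
    (huniv : g (boundedIndicator Set.univ) = 1) (𝔄 : Set (Set S)) :
    IsFinAdd 𝔄 fun X => g (boundedIndicator X) := by
  refine ⟨?_, fun X _ => ⟨hg _ ?_, ?_⟩, fun A _ B _ hAB => ?_⟩
  · rw [← map_zero g]
    exact congrArg g (Subtype.ext (Set.indicator_empty 1))
  · exact Set.indicator_nonneg fun _ _ => zero_le_one
  · rw [← huniv, ← sub_nonneg, ← map_sub]
    refine hg _ fun x => ?_
    by_cases hx : x ∈ X <;> simp [boundedIndicator, hx]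
  · rw [← map_add]
    exact congrArg g (Subtype.ext (Set.indicator_union_of_disjoint hAB 1))

end BoundedFunctions

section Extension

variable {S : Type*} (𝔄₁ 𝔄₂ : Set (Set S)) (ν₁ ν₂ : Set S → ℝ)

noncomputable def indicatorCombination : (𝔄₁ →₀ ℝ) × (𝔄₂ →₀ ℝ) →ₗ[ℝ] S → ℝ :=
  (Finsupp.linearCombination ℝ fun A : 𝔄₁ => (A : Set S).indicator 1).coprod
    (Finsupp.linearCombination ℝ fun B : 𝔄₂ => (B : Set S).indicator 1)

noncomputable def measureCombination : (𝔄₁ →₀ ℝ) × (𝔄₂ →₀ ℝ) →ₗ[ℝ] ℝ :=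
  (Finsupp.linearCombination ℝ fun A : 𝔄₁ => ν₁ A).coprod
    (Finsupp.linearCombination ℝ fun B : 𝔄₂ => ν₂ B)

variable {𝔄₁ 𝔄₂ ν₁ ν₂}

theorem indicatorCombination_mem_boundedFunctions (v : (𝔄₁ →₀ ℝ) × (𝔄₂ →₀ ℝ)) :
    indicatorCombination 𝔄₁ 𝔄₂ v ∈ boundedFunctions S := by
  refine (?_ : LinearMap.range (indicatorCombination 𝔄₁ 𝔄₂) ≤ _) (LinearMap.mem_range_self _ v)
  rw [indicatorCombination, LinearMap.range_coprod, Finsupp.range_linearCombination,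
    Finsupp.range_linearCombination]
  exact sup_le (Submodule.span_le.2 (Set.range_subset_iff.2 fun A => (boundedIndicator A.1).2))
    (Submodule.span_le.2 (Set.range_subset_iff.2 fun B => (boundedIndicator B.1).2))

theorem measureCombination_nonneg (h𝔄₁ : IsSetAlg 𝔄₁) (h𝔄₂ : IsSetAlg 𝔄₂)
    (hν₁ : IsFinAdd 𝔄₁ ν₁) (hν₂ : IsFinAdd 𝔄₂ ν₂) (htot₁ : ν₁ Set.univ = 1)
    (htot₂ : ν₂ Set.univ = 1) (hmono : ∀ U ∈ 𝔄₁, ∀ W ∈ 𝔄₂, W ⊆ U → ν₂ W ≤ ν₁ U)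
    (v : (𝔄₁ →₀ ℝ) × (𝔄₂ →₀ ℝ)) (hv : 0 ≤ indicatorCombination 𝔄₁ 𝔄₂ v) :
    0 ≤ measureCombination 𝔄₁ 𝔄₂ ν₁ ν₂ v := by
  obtain ⟨c, d⟩ := v
  have hle : Finsupp.linearCombination ℝ (fun B : 𝔄₂ => (B : Set S).indicator (1 : S → ℝ)) (-d)
      ≤ Finsupp.linearCombination ℝ (fun A : 𝔄₁ => (A : Set S).indicator 1) c := fun x => by
    have := hv x
    simp only [indicatorCombination, LinearMap.coprod_apply, Pi.add_apply, Pi.zero_apply] at this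
    simp only [map_neg, Pi.neg_apply]
    linarith
  have := linearCombination_le_of_indicator_le h𝔄₁ h𝔄₂ hν₁ hν₂ htot₁ htot₂ hmono
    c Subtype.val (fun A => A.2) (-d) Subtype.val (fun B => B.2) hle
  simp only [map_neg, measureCombination, LinearMap.coprod_apply] at this ⊢
  linarith

theorem exists_nonneg_functional_indicator_eq (h𝔄₁ : IsSetAlg 𝔄₁) (h𝔄₂ : IsSetAlg 𝔄₂)
    (hν₁ : IsFinAdd 𝔄₁ ν₁) (hν₂ : IsFinAdd 𝔄₂ ν₂) (htot₁ : ν₁ Set.univ = 1)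
    (htot₂ : ν₂ Set.univ = 1) (hmono : ∀ U ∈ 𝔄₁, ∀ W ∈ 𝔄₂, W ⊆ U → ν₂ W ≤ ν₁ U) :
    ∃ g : boundedFunctions S →ₗ[ℝ] ℝ, (∀ f : boundedFunctions S, 0 ≤ (f : S → ℝ) → 0 ≤ g f) ∧
      (∀ A ∈ 𝔄₁, g (boundedIndicator A) = ν₁ A) ∧
      (∀ B ∈ 𝔄₂, g (boundedIndicator B) = ν₂ B) := by
  let T := (indicatorCombination 𝔄₁ 𝔄₂).codRestrict _ indicatorCombination_mem_boundedFunctions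
  let s := (PointedCone.positive ℝ (S → ℝ)).comap (boundedFunctions S).subtype
  have hdense : ∀ y, ∃ v, T v + y ∈ s := by
    rintro ⟨y, M, hM⟩
    refine ⟨(Finsupp.single ⟨Set.univ, h𝔄₁.univ_mem⟩ M, 0), fun x => ?_⟩
    simpa [T, indicatorCombination] using neg_le_iff_add_nonneg'.1 (abs_le.1 (hM x)).1
  obtain ⟨g, hgT, hgs⟩ := exists_nonneg_functional_comp_eq s T (measureCombination 𝔄₁ 𝔄₂ ν₁ ν₂)
    (measureCombination_nonneg h𝔄₁ h𝔄₂ hν₁ hν₂ htot₁ htot₂ hmono) hdense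
  refine ⟨g, fun f hf => hgs f hf, fun A hA => ?_, fun B hB => ?_⟩
  · have : boundedIndicator A = T (Finsupp.single ⟨A, hA⟩ 1, 0) := by
      ext x; simp [T, indicatorCombination, boundedIndicator]
    simp [this, hgT, measureCombination]
  · have : boundedIndicator B = T (0, Finsupp.single ⟨B, hB⟩ 1) := by
      ext x; simp [T, indicatorCombination, boundedIndicator]
    simp [this, hgT, measureCombination]

end Extension

theorem exists_common_finitely_additive_extension_general
    {S : Type*} (𝔄 𝔄₁ 𝔄₂ : Set (Set S))
    (h𝔄₁ : IsSetAlg 𝔄₁) (h𝔄₂ : IsSetAlg 𝔄₂)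
    (ν₁ ν₂ : Set S → ℝ)
    (hν₁ : IsFinAdd 𝔄₁ ν₁) (hν₂ : IsFinAdd 𝔄₂ ν₂)
    (htot₁ : ν₁ Set.univ = 1) (htot₂ : ν₂ Set.univ = 1)
    (hcomp : ∀ A₁ ∈ 𝔄₁, ∀ A₂ ∈ 𝔄₂, A₁ ∩ A₂ = ∅ → ν₁ A₁ + ν₂ A₂ ≤ 1) :
    ∃ ν : Set S → ℝ, IsFinAdd 𝔄 ν ∧ ν Set.univ = 1 ∧
      (∀ A ∈ 𝔄₁, ν A = ν₁ A) ∧ (∀ A ∈ 𝔄₂, ν A = ν₂ A) := by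
  have hmono : ∀ U ∈ 𝔄₁, ∀ W ∈ 𝔄₂, W ⊆ U → ν₂ W ≤ ν₁ U := fun U hU W hW hWU => by
    have := hcomp Uᶜ (h𝔄₁.compl_mem hU) W hW
      (by rwa [Set.inter_comm, ← Set.sdiff_eq, Set.sdiff_eq_empty])
    rw [hν₁.measure_compl h𝔄₁ htot₁ hU] at this
    linarith
  obtain ⟨g, hg, h₁, h₂⟩ :=
    exists_nonneg_functional_indicator_eq h𝔄₁ h𝔄₂ hν₁ hν₂ htot₁ htot₂ hmono
  have huniv : g (boundedIndicator Set.univ) = 1 := (h₁ _ h𝔄₁.univ_mem).trans htot₁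
  exact ⟨_, isFinAdd_comp_boundedIndicator g hg huniv 𝔄, huniv, h₁, h₂⟩

/-- Strassen's common extension theorem for finitely additive measures
(Lemma 3 of the paper, Fremlin 457C). -/
theorem exists_common_finitely_additive_extension
    {S : Type*} (𝔄 𝔄₁ 𝔄₂ : Set (Set S))
    (h𝔄 : IsSetAlg 𝔄) (h𝔄₁ : IsSetAlg 𝔄₁) (h𝔄₂ : IsSetAlg 𝔄₂)
    (hsub₁ : 𝔄₁ ⊆ 𝔄) (hsub₂ : 𝔄₂ ⊆ 𝔄)
    (ν₁ ν₂ : Set S → ℝ)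
    (hν₁ : IsFinAdd 𝔄₁ ν₁) (hν₂ : IsFinAdd 𝔄₂ ν₂)
    (htot₁ : ν₁ Set.univ = 1) (htot₂ : ν₂ Set.univ = 1)
    (hcomp : ∀ A₁ ∈ 𝔄₁, ∀ A₂ ∈ 𝔄₂, A₁ ∩ A₂ = ∅ → ν₁ A₁ + ν₂ A₂ ≤ 1) :
    ∃ ν : Set S → ℝ, IsFinAdd 𝔄 ν ∧ ν Set.univ = 1 ∧
      (∀ A ∈ 𝔄₁, ν A = ν₁ A) ∧ (∀ A ∈ 𝔄₂, ν A = ν₂ A) :=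
  exists_common_finitely_additive_extension_general 𝔄 𝔄₁ 𝔄₂ h𝔄₁ h𝔄₂ ν₁ ν₂ hν₁ hν₂ htot₁ htot₂ hcomp
end

section
/- Let S be a nonempty set, V ⊆ ℓ∞(S) a linear subspace of countable dimension, and W a subspace of V containing all constant functions. Let X be a measurable space and for each x ∈ X let Ψˣ : W → ℝ be a linear functional such that x ↦ Ψˣ(f) is measurable for every f ∈ W, Ψˣ(1) = 1, and Ψˣ(f) ≥ 0 for every f ∈ W with f ≥ 0 pointwise. Then there exist linear functionals Φˣ : V → ℝ extending Ψˣ, such that x ↦ Φˣ(f) is measurable for every f ∈ V and Φˣ(f) ≥ 0 for every f ∈ V with f ≥ 0 pointwise. -/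
open Submodule

/-!
A positive functional `φ` on `U` extends positively to `U ⊔ ℝ g` by any value `c` with
`φ v ≤ c ≤ φ w` whenever `v ≤ g ≤ w` (`v, w ∈ U`); we take `c = inf {φ w | g ≤ w}`. The infimum
over all of `U` need not depend measurably on the parameter, but when `U` is spanned by a countable
set `G` of bounded functions, the rational span of `G ∪ {1}` is countable and approximates every
element of `U` uniformly from above. So the infimum may be taken over it, which makes it a countable
infimum of measurable functions. Adjoining the vectors of a countable spanning set of `V` one at a
time and passing to the union of the resulting chain gives the extension.
-/

def IsUpperDense {M : Type*} [LE M] [Add M] [SMul ℝ M] (T : Set M) (e : M) : Prop :=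
  ∀ u : M, ∀ ε : ℝ, 0 < ε → ∃ t ∈ T, u ≤ t ∧ t ≤ u + ε • e

namespace LinearMap

variable {E : Type*} [AddCommGroup E] [Module ℝ E] {U : Submodule ℝ E}

noncomputable def supSpanSingleton (φ : U →ₗ[ℝ] ℝ) (g : E) (c : ℝ) (hg : g ∉ U) :
    ↥(U ⊔ span ℝ {g}) →ₗ[ℝ] ℝ :=
  (LinearPMap.supSpanSingleton ⟨U, φ⟩ g c hg).toFun

theorem supSpanSingleton_apply_add_smul (φ : U →ₗ[ℝ] ℝ) {g : E} {c : ℝ} (hg : g ∉ U) {u : E}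
    (hu : u ∈ U) (a : ℝ) (hf : u + a • g ∈ U ⊔ span ℝ {g}) :
    φ.supSpanSingleton g c hg ⟨u + a • g, hf⟩ = φ ⟨u, hu⟩ + a * c :=
  LinearPMap.supSpanSingleton_apply_mk _ _ _ hg _ hu a

theorem supSpanSingleton_inclusion (φ : U →ₗ[ℝ] ℝ) {g : E} {c : ℝ} (hg : g ∉ U) (u : U) :
    φ.supSpanSingleton g c hg (inclusion le_sup_left u) = φ u :=
  LinearPMap.supSpanSingleton_apply_mk_of_mem _ _ hg u.2

variable [PartialOrder E]

theorem monotone_supSpanSingleton [IsOrderedAddMonoid E] [PosSMulMono ℝ E] {φ : U →ₗ[ℝ] ℝ}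
    (hφ : Monotone φ) {g : E} (hg : g ∉ U) {c : ℝ}
    (hlow : ∀ v : U, (v : E) ≤ g → φ v ≤ c) (hup : ∀ w : U, g ≤ w → c ≤ φ w) :
    Monotone (φ.supSpanSingleton g c hg) := by
  rw [monotone_iff_map_nonneg] at hφ ⊢
  rintro ⟨z, hz⟩ hz0
  obtain ⟨x, hx, _, hrg, rfl⟩ := mem_sup.1 hz
  obtain ⟨r, rfl⟩ := mem_span_singleton.1 hrg
  replace hz0 : 0 ≤ x + r • g := hz0
  rw [supSpanSingleton_apply_add_smul _ hg hx]
  rcases lt_trichotomy r 0 with hr | rfl | hr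
  · have hgx : g ≤ ((-r)⁻¹ • ⟨x, hx⟩ : U) := by
      have h := smul_nonneg (inv_nonneg.2 (neg_nonneg.2 hr.le)) hz0
      rwa [smul_add, smul_smul,
        show (-r)⁻¹ * r = -1 by rw [inv_neg, neg_mul, inv_mul_cancel₀ hr.ne],
        neg_one_smul, ← sub_eq_add_neg, sub_nonneg] at h
    have h := hup _ hgx
    rw [map_smul, smul_eq_mul, le_inv_mul_iff₀ (neg_pos.2 hr)] at h
    linarith
  · simpa using hφ ⟨x, hx⟩ (by simpa using hz0 : (0 : E) ≤ x)
  · have hxg : ((-(r⁻¹ • ⟨x, hx⟩) : U) : E) ≤ g := by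
      have h := smul_nonneg (inv_nonneg.2 hr.le) hz0
      rw [smul_add, smul_smul, inv_mul_cancel₀ hr.ne', one_smul, ← neg_le_iff_add_nonneg] at h
      exact _root_.neg_le.1 h
    have h := hlow _ hxg
    rw [map_neg, map_smul, smul_eq_mul, _root_.neg_le, le_inv_mul_iff₀ hr] at h
    linarith

variable (φ : U →ₗ[ℝ] ℝ) (T : Set U) (g : E)

noncomputable def infAbove : ℝ :=
  ⨅ t : {t ∈ T | g ≤ (t : E)}, φ t

variable {φ T g}

theorem infAbove_le (hφ : Monotone φ) {e : U} (hT : IsUpperDense T e) (hg : ∃ v : U, (v : E) ≤ g)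
    {u : U} (hu : g ≤ u) : φ.infAbove T g ≤ φ u := by
  obtain ⟨v, hv⟩ := hg
  have hbdd : BddBelow (Set.range fun t : {t ∈ T | g ≤ (t : E)} => φ t) :=
    ⟨φ v, by rintro _ ⟨t, rfl⟩; exact hφ (hv.trans t.2.2)⟩
  refine le_of_forall_pos_le_add fun δ hδ => ?_
  obtain ⟨t, htT, hut, hte⟩ := hT u (δ / (|φ e| + 1)) (by positivity)
  have hsmall : δ / (|φ e| + 1) * φ e ≤ δ := by
    rw [div_mul_eq_mul_div, div_le_iff₀ (by positivity)]
    nlinarith [le_abs_self (φ e)]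
  calc φ.infAbove T g ≤ φ t := ciInf_le hbdd ⟨t, htT, hu.trans hut⟩
    _ ≤ φ (u + (δ / (|φ e| + 1)) • e) := hφ hte
    _ ≤ φ u + δ := by rw [map_add, map_smul, smul_eq_mul]; linarith

theorem le_infAbove (hφ : Monotone φ) {e : U} (hT : IsUpperDense T e) (hg : ∃ w : U, g ≤ w)
    {v : U} (hv : (v : E) ≤ g) : φ v ≤ φ.infAbove T g := by
  obtain ⟨w, hw⟩ := hg
  obtain ⟨t, htT, hwt, -⟩ := hT w 1 one_pos
  have : Nonempty {t ∈ T | g ≤ (t : E)} := ⟨⟨t, htT, hw.trans hwt⟩⟩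
  exact le_ciInf fun t => hφ (hv.trans t.2.2)

theorem measurable_infAbove {X : Type*} [MeasurableSpace X] {Φ : X → U →ₗ[ℝ] ℝ}
    (hΦ : ∀ u, Measurable fun x => Φ x u) (hT : T.Countable) :
    Measurable fun x => (Φ x).infAbove T g := by
  have := (hT.mono (Set.sep_subset T fun t : U => g ≤ (t : E))).to_subtype
  exact Measurable.iInf fun t => hΦ t

variable (φ T g)

open Classical in
noncomputable def extendInfAbove : ↥(U ⊔ span ℝ {g}) →ₗ[ℝ] ℝ :=
  if hg : g ∈ U then φ.comp (inclusion (sup_le le_rfl ((span_singleton_le_iff_mem _ _).2 hg)))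
  else φ.supSpanSingleton g (φ.infAbove T g) hg

variable {φ T g}

theorem extendInfAbove_of_mem (hg : g ∈ U) :
    extendInfAbove φ T g =
      φ.comp (inclusion (sup_le le_rfl ((span_singleton_le_iff_mem _ _).2 hg))) :=
  dif_pos hg

theorem extendInfAbove_of_notMem (hg : g ∉ U) :
    extendInfAbove φ T g = φ.supSpanSingleton g (φ.infAbove T g) hg :=
  dif_neg hg

theorem extendInfAbove_inclusion (u : U) :
    extendInfAbove φ T g (inclusion le_sup_left u) = φ u := by
  by_cases hg : g ∈ U
  · rw [extendInfAbove_of_mem hg]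
    rfl
  · rw [extendInfAbove_of_notMem hg, supSpanSingleton_inclusion]

theorem monotone_extendInfAbove [IsOrderedAddMonoid E] [PosSMulMono ℝ E] (hφ : Monotone φ)
    {e : U} (hT : IsUpperDense T e) (hg : ∃ v w : U, (v : E) ≤ g ∧ g ≤ w) :
    Monotone (extendInfAbove φ T g) := by
  obtain ⟨v, w, hv, hw⟩ := hg
  by_cases hgU : g ∈ U
  · rw [extendInfAbove_of_mem hgU]
    exact hφ.comp fun _ _ h => h
  · rw [extendInfAbove_of_notMem hgU]
    exact monotone_supSpanSingleton hφ hgU (fun _ h => le_infAbove hφ hT ⟨w, hw⟩ h)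
      (fun _ h => infAbove_le hφ hT ⟨v, hv⟩ h)

theorem measurable_extendInfAbove {X : Type*} [MeasurableSpace X] {Φ : X → U →ₗ[ℝ] ℝ}
    (hΦ : ∀ u, Measurable fun x => Φ x u) (hT : T.Countable) (f : ↥(U ⊔ span ℝ {g})) :
    Measurable fun x => extendInfAbove (Φ x) T g f := by
  by_cases hg : g ∈ U
  · simp only [extendInfAbove_of_mem hg]
    exact hΦ _
  · obtain ⟨f, hf⟩ := f
    obtain ⟨u, hu, _, hv, rfl⟩ := mem_sup.1 hf
    obtain ⟨a, rfl⟩ := mem_span_singleton.1 hv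
    simp only [extendInfAbove_of_notMem hg, supSpanSingleton_apply_add_smul _ hg hu]
    exact (hΦ _).add ((measurable_infAbove hΦ hT).const_mul a)

end LinearMap

namespace Submodule

variable {R E : Type*} [Semiring R] [AddCommMonoid E] [Module R E]

def adjoinSeq (U₀ : Submodule R E) (g : ℕ → E) : ℕ → Submodule R E
  | 0 => U₀
  | n + 1 => adjoinSeq U₀ g n ⊔ span R {g n}

variable {U₀ : Submodule R E} {g : ℕ → E}

theorem monotone_adjoinSeq : Monotone (adjoinSeq U₀ g) :=
  monotone_nat_of_le_succ fun _ => le_sup_left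

theorem le_adjoinSeq (n : ℕ) : U₀ ≤ adjoinSeq U₀ g n :=
  monotone_adjoinSeq (Nat.zero_le n)

theorem adjoinSeq_le {V : Submodule R E} (hU₀ : U₀ ≤ V) (hg : ∀ n, g n ∈ V) :
    ∀ n, adjoinSeq U₀ g n ≤ V
  | 0 => hU₀
  | n + 1 => sup_le (adjoinSeq_le hU₀ hg n) ((span_singleton_le_iff_mem _ _).2 (hg n))

theorem span_range_le_iSup_adjoinSeq : span R (Set.range g) ≤ ⨆ n, adjoinSeq U₀ g n :=
  span_le.2 <| Set.range_subset_iff.2 fun n =>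
    mem_iSup_of_mem (n + 1) (mem_sup_right (mem_span_singleton_self (g n)))

theorem exists_mem_adjoinSeq {f : E} (hf : f ∈ ⨆ n, adjoinSeq U₀ g n) :
    ∃ n, f ∈ adjoinSeq U₀ g n :=
  (mem_iSup_of_directed _ monotone_adjoinSeq.directed_le).1 hf

theorem exists_countable_span_eq_adjoinSeq (hU₀ : ∃ G : Set E, G.Countable ∧ span R G = U₀) :
    ∀ n, ∃ G : Set E, G.Countable ∧ span R G = adjoinSeq U₀ g n
  | 0 => hU₀
  | n + 1 => by
    obtain ⟨G, hGc, hG⟩ := exists_countable_span_eq_adjoinSeq hU₀ n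
    exact ⟨insert (g n) G, hGc.insert _, by rw [span_insert, hG, sup_comm]; rfl⟩

end Submodule

namespace LinearMap

variable {E : Type*} [AddCommGroup E] [Module ℝ E] [PartialOrder E] {U₀ : Submodule ℝ E}

noncomputable def extendSeq (φ : U₀ →ₗ[ℝ] ℝ) (g : ℕ → E) (T : ∀ n, Set (adjoinSeq U₀ g n)) :
    ∀ n, adjoinSeq U₀ g n →ₗ[ℝ] ℝ
  | 0 => φ
  | n + 1 => extendInfAbove (extendSeq φ g T n) (T n) (g n)

variable {φ : U₀ →ₗ[ℝ] ℝ} {g : ℕ → E} {T : ∀ n, Set (adjoinSeq U₀ g n)}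

theorem extendSeq_succ_inclusion (n : ℕ) (u : adjoinSeq U₀ g n) :
    φ.extendSeq g T (n + 1) (inclusion le_sup_left u) = φ.extendSeq g T n u :=
  extendInfAbove_inclusion u

theorem monotone_extendSeq_pMap (φ : U₀ →ₗ[ℝ] ℝ) (g : ℕ → E) (T : ∀ n, Set (adjoinSeq U₀ g n)) :
    Monotone fun n => (⟨adjoinSeq U₀ g n, φ.extendSeq g T n⟩ : E →ₗ.[ℝ] ℝ) := by
  refine monotone_nat_of_le_succ fun n => ⟨le_sup_left, fun u v huv => ?_⟩
  obtain rfl : v = inclusion le_sup_left u := Subtype.ext huv.symm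
  exact (extendSeq_succ_inclusion (T := T) n u).symm

variable (φ g T)

noncomputable def extendSeqSup : ↥(⨆ n, adjoinSeq U₀ g n) →ₗ[ℝ] ℝ :=
  (LinearPMap.sSup _ (directedOn_range.2 (monotone_extendSeq_pMap φ g T).directed_le)).toFun.comp
    (inclusion (iSup_le fun n => le_sSup ⟨_, Set.mem_range_self n, rfl⟩))

variable {φ g T}

theorem extendSeqSup_apply_of_mem {n : ℕ} (f : ↥(⨆ n, adjoinSeq U₀ g n))
    (hf : (f : E) ∈ adjoinSeq U₀ g n) :
    φ.extendSeqSup g T f = φ.extendSeq g T n ⟨f, hf⟩ := by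
  have := LinearPMap.sSup_apply (l := ⟨adjoinSeq U₀ g n, φ.extendSeq g T n⟩)
    (directedOn_range.2 (monotone_extendSeq_pMap φ g T).directed_le) (Set.mem_range_self n) ⟨f, hf⟩
  rw [extendSeqSup, comp_apply]
  exact this

theorem monotone_extendSeq [IsOrderedAddMonoid E] [PosSMulMono ℝ E] (hφ : Monotone φ)
    {e : ∀ n, adjoinSeq U₀ g n} (hT : ∀ n, IsUpperDense (T n) (e n))
    (hg : ∀ n, ∃ v w : adjoinSeq U₀ g n, (v : E) ≤ g n ∧ g n ≤ w) :
    ∀ n, Monotone (φ.extendSeq g T n)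
  | 0 => hφ
  | n + 1 => monotone_extendInfAbove (g := g n) (monotone_extendSeq hφ hT hg n) (hT n) (hg n)

theorem measurable_extendSeq {X : Type*} [MeasurableSpace X] {Φ : X → U₀ →ₗ[ℝ] ℝ}
    (hΦ : ∀ u, Measurable fun x => Φ x u) (hT : ∀ n, (T n).Countable) :
    ∀ n u, Measurable fun x => (Φ x).extendSeq g T n u
  | 0 => hΦ
  | n + 1 => measurable_extendInfAbove (g := g n) (measurable_extendSeq hΦ hT n) (hT n)

theorem monotone_extendSeqSup [IsOrderedAddMonoid E] [PosSMulMono ℝ E] (hφ : Monotone φ)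
    {e : ∀ n, adjoinSeq U₀ g n} (hT : ∀ n, IsUpperDense (T n) (e n))
    (hg : ∀ n, ∃ v w : adjoinSeq U₀ g n, (v : E) ≤ g n ∧ g n ≤ w) :
    Monotone (φ.extendSeqSup g T) := by
  refine (monotone_iff_map_nonneg _).2 fun f hf => ?_
  obtain ⟨n, hn⟩ := exists_mem_adjoinSeq f.2
  rw [extendSeqSup_apply_of_mem f hn]
  exact (monotone_iff_map_nonneg _).1 (monotone_extendSeq hφ hT hg n) ⟨f, hn⟩ hf

theorem measurable_extendSeqSup {X : Type*} [MeasurableSpace X] {Φ : X → U₀ →ₗ[ℝ] ℝ}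
    (hΦ : ∀ u, Measurable fun x => Φ x u) (hT : ∀ n, (T n).Countable)
    (f : ↥(⨆ n, adjoinSeq U₀ g n)) : Measurable fun x => (Φ x).extendSeqSup g T f := by
  obtain ⟨n, hn⟩ := exists_mem_adjoinSeq f.2
  simp only [extendSeqSup_apply_of_mem f hn]
  exact measurable_extendSeq hΦ hT n _

end LinearMap

theorem Submodule.exists_countable_span_eq_of_le_span {K M : Type*} [DivisionRing K]
    [AddCommGroup M] [Module K M] {W : Submodule K M} {D : Set M} (hD : D.Countable)
    (hWD : W ≤ span K D) : ∃ G : Set M, G.Countable ∧ span K G = W := by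
  let b := Module.Basis.ofVectorSpace K W
  have : Countable (Module.Basis.ofVectorSpaceIndex K W) := by
    rw [← Cardinal.mk_le_aleph0_iff, b.mk_eq_rank'']
    exact (rank_mono hWD).trans
      ((rank_span_le D).trans (Cardinal.mk_le_aleph0_iff.2 hD.to_subtype))
  refine ⟨W.subtype '' Set.range b, (Set.countable_range b).image _, ?_⟩
  rw [span_image, b.span_eq, map_subtype_top]

section BoundedFunctions

variable {S : Type*}

theorem mul_le_of_le_div_add_one {a b δ : ℝ} (ha : 0 ≤ a) (hb : 0 ≤ b) (h : b ≤ δ / (a + 1)) :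
    a * b ≤ δ :=
  calc a * b ≤ (a + 1) * b := by nlinarith
    _ ≤ (a + 1) * (δ / (a + 1)) := by gcongr
    _ = δ := mul_div_cancel₀ _ (by positivity)

theorem exists_ratSpan_near {G : Set (S → ℝ)} (hbdd : ∀ u ∈ span ℝ G, ∃ C, ∀ s, |u s| ≤ C)
    {u : S → ℝ} (hu : u ∈ span ℝ G) : ∀ ε > 0, ∃ t ∈ span ℚ G, ∀ s, |t s - u s| ≤ ε := by
  induction hu using span_induction with
  | mem x hx => exact fun ε hε => ⟨x, subset_span hx, fun s => by simpa using hε.le⟩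
  | zero => exact fun ε hε => ⟨0, zero_mem _, fun s => by simpa using hε.le⟩
  | add x y _ _ ihx ihy =>
    intro ε hε
    obtain ⟨t₁, ht₁, h₁⟩ := ihx (ε / 2) (half_pos hε)
    obtain ⟨t₂, ht₂, h₂⟩ := ihy (ε / 2) (half_pos hε)
    refine ⟨t₁ + t₂, add_mem ht₁ ht₂, fun s => ?_⟩
    calc |(t₁ + t₂) s - (x + y) s| = |(t₁ s - x s) + (t₂ s - y s)| := by
          rw [Pi.add_apply, Pi.add_apply, add_sub_add_comm]
      _ ≤ ε / 2 + ε / 2 := (abs_add_le _ _).trans (add_le_add (h₁ s) (h₂ s))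
      _ = ε := add_halves ε
  | smul a x hx ihx =>
    intro ε hε
    obtain ⟨C, hC⟩ := hbdd x hx
    obtain ⟨q, hq⟩ := exists_rat_near a (show 0 < ε / 2 / (|C| + 1) by positivity)
    obtain ⟨t, ht, htx⟩ := ihx (ε / 2 / (|(q : ℝ)| + 1)) (by positivity)
    refine ⟨q • t, smul_mem _ q ht, fun s => ?_⟩
    calc |(q • t) s - (a • x) s| = |q * (t s - x s) + (q - a) * x s| := by
          rw [Pi.smul_apply, Pi.smul_apply, Rat.smul_def, smul_eq_mul]; ring_nf
      _ ≤ |(q : ℝ)| * |t s - x s| + |x s| * |a - q| := by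
          rw [abs_sub_comm a, mul_comm |x s|, ← abs_mul, ← abs_mul]
          exact abs_add_le _ _
      _ ≤ ε / 2 + |C| * |a - q| :=
          add_le_add (mul_le_of_le_div_add_one (abs_nonneg _) (abs_nonneg _) (htx s))
            (mul_le_mul_of_nonneg_right ((hC s).trans (le_abs_self C)) (abs_nonneg _))
      _ ≤ ε / 2 + ε / 2 := by
          gcongr
          exact mul_le_of_le_div_add_one (abs_nonneg _) (abs_nonneg _) hq.le
      _ = ε := add_halves ε

theorem isUpperDense_ratSpan {U : Submodule ℝ (S → ℝ)} {G : Set (S → ℝ)} (hGU : span ℝ G = U)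
    (h1 : (1 : S → ℝ) ∈ G) (hbdd : ∀ u ∈ U, ∃ C, ∀ s, |u s| ≤ C) :
    IsUpperDense {t : U | (t : S → ℝ) ∈ span ℚ G} ⟨1, hGU ▸ subset_span h1⟩ := by
  subst hGU
  rintro ⟨u, hu⟩ ε hε
  obtain ⟨q, hq0, hqε⟩ := exists_rat_btwn (half_pos hε)
  obtain ⟨t, ht, htu⟩ := exists_ratSpan_near hbdd hu q hq0
  have hmem : t + q • 1 ∈ span ℚ G := add_mem ht (smul_mem _ q (subset_span h1))
  refine ⟨⟨t + q • 1, span_subset_span ℚ ℝ G hmem⟩, hmem, fun s => ?_, fun s => ?_⟩ <;>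
  · have := abs_le.1 (htu s)
    simp only [Pi.add_apply, Pi.smul_apply, Rat.smul_def, Pi.one_apply, mul_one, smul_eq_mul,
      coe_add, coe_smul] at this ⊢
    linarith

theorem countable_ratSpan {U : Submodule ℝ (S → ℝ)} {G : Set (S → ℝ)} (hG : G.Countable) :
    {t : U | (t : S → ℝ) ∈ span ℚ G}.Countable := by
  have : Countable G := hG.to_subtype
  have hspan : Countable (span ℚ (Set.range ((↑) : G → S → ℝ))) := inferInstance
  rw [Subtype.range_coe] at hspan
  exact (Set.countable_coe_iff.1 hspan).preimage Subtype.coe_injective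

theorem exists_le_ge_of_bounded {U : Submodule ℝ (S → ℝ)} (h1 : (1 : S → ℝ) ∈ U) {f : S → ℝ}
    (hf : ∃ C, ∀ s, |f s| ≤ C) : ∃ v w : U, (v : S → ℝ) ≤ f ∧ f ≤ w := by
  obtain ⟨C, hC⟩ := hf
  exact ⟨⟨(-C) • 1, smul_mem _ _ h1⟩, ⟨C • 1, smul_mem _ _ h1⟩,
    fun s => by simpa using neg_le_of_abs_le (hC s), fun s => by simpa using le_of_abs_le (hC s)⟩

theorem exists_countable_isUpperDense {U : Submodule ℝ (S → ℝ)}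
    (hU : ∃ G : Set (S → ℝ), G.Countable ∧ span ℝ G = U) (h1 : (1 : S → ℝ) ∈ U)
    (hbdd : ∀ u ∈ U, ∃ C, ∀ s, |u s| ≤ C) : ∃ T : Set U, T.Countable ∧ IsUpperDense T ⟨1, h1⟩ := by
  obtain ⟨G, hGc, hGU⟩ := hU
  have hG1U : span ℝ (insert 1 G) = U := by rw [span_insert_eq_span (hGU ▸ h1), hGU]
  exact ⟨_, countable_ratSpan (hGc.insert 1), isUpperDense_ratSpan hG1U (Set.mem_insert 1 G) hbdd⟩

end BoundedFunctions

theorem measurable_positive_extension_general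
    {S : Type*} {X : Type*} [MeasurableSpace X]
    (V W : Submodule ℝ (S → ℝ)) (hWV : W ≤ V)
    (hVbdd : ∀ f ∈ V, ∃ C : ℝ, ∀ s : S, |f s| ≤ C)
    (hVcount : ∃ D : Set (S → ℝ), D.Countable ∧ V = Submodule.span ℝ D)
    (hconst : ∀ c : ℝ, (fun _ : S => c) ∈ W)
    (Ψ : X → W →ₗ[ℝ] ℝ)
    (hmeas : ∀ f : W, Measurable fun x => Ψ x f)
    (hpos : ∀ x : X, ∀ f : W, (0 : S → ℝ) ≤ (f : S → ℝ) → 0 ≤ Ψ x f) :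
    ∃ Φ : X → V →ₗ[ℝ] ℝ,
      (∀ x : X, ∀ f : S → ℝ, ∀ hf : f ∈ W, Φ x ⟨f, hWV hf⟩ = Ψ x ⟨f, hf⟩) ∧
      (∀ f : V, Measurable fun x => Φ x f) ∧
      (∀ x : X, ∀ f : V, (0 : S → ℝ) ≤ (f : S → ℝ) → 0 ≤ Φ x f) := by
  obtain ⟨D, hDc, rfl⟩ := hVcount
  -- `insert 0` makes the spanning set nonempty, so that it can be enumerated.
  obtain ⟨g, hg⟩ := (hDc.insert 0).exists_eq_range (Set.insert_nonempty 0 D)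
  have hgV : ∀ n, g n ∈ span ℝ D := fun n => by
    rw [← span_insert_zero, hg]; exact subset_span ⟨n, rfl⟩
  have hV : span ℝ D ≤ ⨆ n, adjoinSeq W g n := by
    rw [← span_insert_zero, hg]; exact span_range_le_iSup_adjoinSeq
  have h1 : ∀ n, (1 : S → ℝ) ∈ adjoinSeq W g n := fun n => le_adjoinSeq n (hconst 1)
  have hbdd : ∀ n, ∀ u ∈ adjoinSeq W g n, ∃ C, ∀ s, |u s| ≤ C :=
    fun n u hu => hVbdd u (adjoinSeq_le hWV hgV n hu)
  choose T hTc hT using fun n => exists_countable_isUpperDense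
    (exists_countable_span_eq_adjoinSeq (exists_countable_span_eq_of_le_span hDc hWV) n) (h1 n)
    (hbdd n)
  have hgT n := exists_le_ge_of_bounded (h1 n) (hVbdd _ (hgV n))
  have hmono x : Monotone (Ψ x) := (monotone_iff_map_nonneg _).2 (hpos x)
  refine ⟨fun x => ((Ψ x).extendSeqSup g T).comp (inclusion hV), fun x f hf => ?_,
    fun f => LinearMap.measurable_extendSeqSup hmeas hTc _, fun x f hf => ?_⟩
  · rw [LinearMap.comp_apply, LinearMap.extendSeqSup_apply_of_mem (n := 0) (T := T)
      (inclusion hV ⟨f, hWV hf⟩) hf]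
    rfl
  · exact (monotone_iff_map_nonneg (((Ψ x).extendSeqSup g T).comp (inclusion hV))).1
      ((LinearMap.monotone_extendSeqSup (hmono x) hT hgT).comp fun _ _ h => h) f hf

/-- Measurable-in-parameter Hahn-Banach extension of positive functionals
(Lemma 4 of the paper). -/
theorem measurable_positive_extension
    {S : Type*} [Nonempty S] {X : Type*} [MeasurableSpace X]
    (V W : Submodule ℝ (S → ℝ)) (hWV : W ≤ V)
    (hVbdd : ∀ f ∈ V, ∃ C : ℝ, ∀ s : S, |f s| ≤ C)
    (hVcount : ∃ D : Set (S → ℝ), D.Countable ∧ V = Submodule.span ℝ D)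
    (hconst : ∀ c : ℝ, (fun _ : S => c) ∈ W)
    (Ψ : X → W →ₗ[ℝ] ℝ)
    (hmeas : ∀ f : W, Measurable fun x => Ψ x f)
    (hone : ∀ x : X, Ψ x ⟨fun _ => 1, hconst 1⟩ = 1)
    (hpos : ∀ x : X, ∀ f : W, (0 : S → ℝ) ≤ (f : S → ℝ) → 0 ≤ Ψ x f) :
    ∃ Φ : X → V →ₗ[ℝ] ℝ,
      (∀ x : X, ∀ f : S → ℝ, ∀ hf : f ∈ W, Φ x ⟨f, hWV hf⟩ = Ψ x ⟨f, hf⟩) ∧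
      (∀ f : V, Measurable fun x => Φ x f) ∧
      (∀ x : X, ∀ f : V, (0 : S → ℝ) ≤ (f : S → ℝ) → 0 ≤ Φ x f) :=
  measurable_positive_extension_general V W hWV hVbdd hVcount hconst Ψ hmeas hpos
end

section
/- Let S₁ be Hausdorff with Radon probability measure μ₁ on its Borel sets, (S₂, Σ₂, μ₂) a probability space, 𝔅₁, 𝔅₂ sub-algebras of the respective σ-algebras, and μ a finitely additive measure on 𝔅₁ ⊗ 𝔅₂ whose marginals are μ₁ and μ₂. Then any decreasing sequence (B_i) of sets in 𝔅₁ ⊗ 𝔅₂ with empty intersection satisfies lim_i μ(B_i) = 0. -/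
open MeasureTheory

/-- The algebra `𝔅₁ ⊗ 𝔅₂` of finite unions of rectangles `B₁ × B₂`, `B_j ∈ 𝔅_j`. -/
def RectAlg {S₁ S₂ : Type*} (𝔅₁ : Set (Set S₁)) (𝔅₂ : Set (Set S₂)) :
    Set (Set (S₁ × S₂)) :=
  { B | ∃ (n : ℕ) (R₁ : Fin n → Set S₁) (R₂ : Fin n → Set S₂),
      (∀ i, R₁ i ∈ 𝔅₁ ∧ R₂ i ∈ 𝔅₂) ∧ B = ⋃ i, R₁ i ×ˢ R₂ i }

/-!
Fix `ε > 0` and write `B n = ⋃ k, R₁ n k ×ˢ R₂ n k`. Inner regularity of `μ₁` gives compact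
`K n k ⊆ R₁ n k` such that the union `E` of all the defects `R₁ n k \ K n k` has `μ₁ E < ε / 2`.
Let `Z n` be the projection to `S₂` of the points lying, for every `j ≤ n`, in some shrunken
rectangle `K j k ×ˢ R₂ j k`. These points form a finite union of rectangles with second sides in
`𝔅₂`, so `Z n ∈ 𝔅₂`; and `⋂ n, Z n = ∅`, since for `y` in every `Z n` the compact sections over `y`
are nonempty and decreasing, hence meet in a point of `⋂ n, B n`. So `μ₂ (Z n) → 0`
by countable additivity of `μ₂`. Finally the part of `B n` outside `univ ×ˢ Z n` lies over `E`, and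
the marginal conditions give `μ (B n) ≤ μ₁ E + μ₂ (Z n) < ε` for large `n`.
-/

open Set Filter Topology

lemma IsSetAlg.isSetAlgebra {S : Type*} {𝔄 : Set (Set S)} (h : IsSetAlg 𝔄) :
    IsSetAlgebra 𝔄 :=
  ⟨h.1, fun s hs => h.2.1 s hs, fun s t hs ht => h.2.2 s hs t ht⟩

section RectAlg

variable {X Y : Type*} {𝒜 : Set (Set X)} {ℬ : Set (Set Y)}

lemma iUnion_prod_mem_rectAlg {n : ℕ} {s : Fin n → Set X} {t : Fin n → Set Y}
    (h : ∀ i, s i ∈ 𝒜 ∧ t i ∈ ℬ) : ⋃ i, s i ×ˢ t i ∈ RectAlg 𝒜 ℬ :=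
  ⟨n, s, t, h, rfl⟩

lemma prod_mem_rectAlg {s : Set X} {t : Set Y} (hs : s ∈ 𝒜) (ht : t ∈ ℬ) :
    s ×ˢ t ∈ RectAlg 𝒜 ℬ :=
  ⟨1, fun _ => s, fun _ => t, fun _ => ⟨hs, ht⟩, (iUnion_const _).symm⟩

lemma empty_mem_rectAlg : (∅ : Set (X × Y)) ∈ RectAlg 𝒜 ℬ :=
  ⟨0, finZeroElim, finZeroElim, finZeroElim, (iUnion_of_empty _).symm⟩

lemma union_mem_rectAlg {A B : Set (X × Y)} (hA : A ∈ RectAlg 𝒜 ℬ) (hB : B ∈ RectAlg 𝒜 ℬ) :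
    A ∪ B ∈ RectAlg 𝒜 ℬ := by
  obtain ⟨n, s, t, hst, rfl⟩ := hA
  obtain ⟨p, s', t', hst', rfl⟩ := hB
  let e := (finSumFinEquiv (m := n) (n := p)).symm
  refine ⟨n + p, Sum.elim s s' ∘ e, Sum.elim t t' ∘ e, fun i => ?_, ?_⟩
  · simp only [Function.comp_apply]
    rcases e i with a | b
    exacts [hst a, hst' b]
  · simp only [Function.comp_apply]
    rw [e.surjective.iUnion_comp fun j => Sum.elim s s' j ×ˢ Sum.elim t t' j, iUnion_sum]
    rfl

lemma iUnion_mem_rectAlg {ι : Type*} [Fintype ι] {A : ι → Set (X × Y)}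
    (hA : ∀ i, A i ∈ RectAlg 𝒜 ℬ) : ⋃ i, A i ∈ RectAlg 𝒜 ℬ := by
  have h := Finset.sup_induction (s := Finset.univ) (p := (· ∈ RectAlg 𝒜 ℬ))
    empty_mem_rectAlg (fun _ h₁ _ h₂ => union_mem_rectAlg h₁ h₂) fun i _ => hA i
  rwa [Finset.sup_univ_eq_iSup] at h

lemma inter_mem_rectAlg (h𝒜 : InfClosed 𝒜) (hℬ : InfClosed ℬ) {A B : Set (X × Y)}
    (hA : A ∈ RectAlg 𝒜 ℬ) (hB : B ∈ RectAlg 𝒜 ℬ) : A ∩ B ∈ RectAlg 𝒜 ℬ := by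
  obtain ⟨n, s, t, hst, rfl⟩ := hA
  obtain ⟨p, s', t', hst', rfl⟩ := hB
  rw [iUnion_inter_iUnion]
  refine iUnion_mem_rectAlg fun i => iUnion_mem_rectAlg fun j => ?_
  rw [prod_inter_prod]
  exact prod_mem_rectAlg (h𝒜 (hst i).1 (hst' j).1) (hℬ (hst i).2 (hst' j).2)

lemma isSetAlgebra_rectAlg (h𝒜 : IsSetAlgebra 𝒜) (hℬ : IsSetAlgebra ℬ) :
    IsSetAlgebra (RectAlg 𝒜 ℬ) where
  empty_mem := empty_mem_rectAlg
  union_mem := fun _ _ => union_mem_rectAlg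
  compl_mem := by
    rintro _ ⟨n, s, t, hst, rfl⟩
    have hcompl : ∀ i, (s i ×ˢ t i)ᶜ ∈ RectAlg 𝒜 ℬ := fun i => by
      rw [compl_prod_eq_union]
      exact union_mem_rectAlg (prod_mem_rectAlg (h𝒜.compl_mem (hst i).1) hℬ.univ_mem)
        (prod_mem_rectAlg h𝒜.univ_mem (hℬ.compl_mem (hst i).2))
    have h := Finset.inf_induction (s := Finset.univ) (p := (· ∈ RectAlg 𝒜 ℬ))
      (by simpa using prod_mem_rectAlg h𝒜.univ_mem hℬ.univ_mem)
      (fun _ h₁ _ h₂ => inter_mem_rectAlg (fun _ hs _ ht => h𝒜.inter_mem hs ht)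
        (fun _ hs _ ht => hℬ.inter_mem hs ht) h₁ h₂) fun i _ => hcompl i
    rw [Finset.inf_univ_eq_iInf] at h
    rwa [compl_iUnion]

lemma image_fst_mem_of_mem_rectAlg (h𝒜 : IsSetAlgebra 𝒜) {A : Set (X × Y)}
    (hA : A ∈ RectAlg 𝒜 ℬ) : Prod.fst '' A ∈ 𝒜 := by
  obtain ⟨n, s, t, hst, rfl⟩ := hA
  have h : ∀ i, Prod.fst '' (s i ×ˢ t i) ∈ 𝒜 := fun i => by
    rcases (t i).eq_empty_or_nonempty with ht | ht
    · simpa [ht] using h𝒜.empty_mem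
    · simpa [fst_image_prod _ ht] using (hst i).1
  simpa [image_iUnion] using h𝒜.biUnion_mem Finset.univ fun i _ => h i

lemma image_snd_mem_of_mem_rectAlg (hℬ : IsSetAlgebra ℬ) {A : Set (X × Y)}
    (hA : A ∈ RectAlg 𝒜 ℬ) : Prod.snd '' A ∈ ℬ := by
  obtain ⟨n, s, t, hst, rfl⟩ := hA
  have h : ∀ i, Prod.snd '' (s i ×ˢ t i) ∈ ℬ := fun i => by
    rcases (s i).eq_empty_or_nonempty with hs | hs
    · simpa [hs] using hℬ.empty_mem
    · simpa [snd_image_prod hs] using (hst i).2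
  simpa [image_iUnion] using hℬ.biUnion_mem Finset.univ fun i _ => h i

end RectAlg

section FinitelyAdditive

variable {α : Type*} {𝒜 : Set (Set α)} {μ : Set α → ℝ}

lemma le_of_subset_of_additive (h𝒜 : IsSetAlgebra 𝒜) (hnonneg : ∀ s ∈ 𝒜, 0 ≤ μ s)
    (hadd : ∀ s ∈ 𝒜, ∀ t ∈ 𝒜, Disjoint s t → μ (s ∪ t) = μ s + μ t)
    {s t : Set α} (hs : s ∈ 𝒜) (ht : t ∈ 𝒜) (hst : s ⊆ t) : μ s ≤ μ t := by
  have hdiff := h𝒜.sdiff_mem ht hs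
  have h := hadd s hs (t \ s) hdiff disjoint_sdiff_right
  rw [union_sdiff_cancel hst] at h
  linarith [hnonneg _ hdiff]

lemma union_le_of_additive (h𝒜 : IsSetAlgebra 𝒜) (hnonneg : ∀ s ∈ 𝒜, 0 ≤ μ s)
    (hadd : ∀ s ∈ 𝒜, ∀ t ∈ 𝒜, Disjoint s t → μ (s ∪ t) = μ s + μ t)
    {s t : Set α} (hs : s ∈ 𝒜) (ht : t ∈ 𝒜) : μ (s ∪ t) ≤ μ s + μ t := by
  have hdiff := h𝒜.sdiff_mem ht hs
  rw [← union_sdiff_self, hadd s hs (t \ s) hdiff disjoint_sdiff_right]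
  gcongr
  exact le_of_subset_of_additive h𝒜 hnonneg hadd hdiff ht sdiff_subset

end FinitelyAdditive

lemma le_measure_image_fst_add_measure {S₁ S₂ : Type*} [MeasurableSpace S₁]
    [MeasurableSpace S₂] {μ₁ : Measure S₁} {μ₂ : Measure S₂} {𝔅₁ : Set (Set S₁)}
    {𝔅₂ : Set (Set S₂)} (h𝔅₁ : IsSetAlgebra 𝔅₁) (h𝔅₂ : IsSetAlgebra 𝔅₂)
    {μ : Set (S₁ × S₂) → ℝ} (hnonneg : ∀ B ∈ RectAlg 𝔅₁ 𝔅₂, 0 ≤ μ B)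
    (hadd : ∀ A ∈ RectAlg 𝔅₁ 𝔅₂, ∀ B ∈ RectAlg 𝔅₁ 𝔅₂, Disjoint A B →
      μ (A ∪ B) = μ A + μ B)
    (hmarg₁ : ∀ B₁ ∈ 𝔅₁, μ (B₁ ×ˢ (Set.univ : Set S₂)) = (μ₁ B₁).toReal)
    (hmarg₂ : ∀ B₂ ∈ 𝔅₂, μ ((Set.univ : Set S₁) ×ˢ B₂) = (μ₂ B₂).toReal)
    {A : Set (S₁ × S₂)} (hA : A ∈ RectAlg 𝔅₁ 𝔅₂) {Z : Set S₂} (hZ : Z ∈ 𝔅₂) :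
    μ A ≤ (μ₁ (Prod.fst '' (A \ univ ×ˢ Z))).toReal + (μ₂ Z).toReal := by
  set P := Prod.fst '' (A \ univ ×ˢ Z)
  have hrect := isSetAlgebra_rectAlg h𝔅₁ h𝔅₂
  have hZ' : univ ×ˢ Z ∈ RectAlg 𝔅₁ 𝔅₂ := prod_mem_rectAlg h𝔅₁.univ_mem hZ
  have hP : P ∈ 𝔅₁ := image_fst_mem_of_mem_rectAlg h𝔅₁ (hrect.sdiff_mem hA hZ')
  have hP' : P ×ˢ univ ∈ RectAlg 𝔅₁ 𝔅₂ := prod_mem_rectAlg hP h𝔅₂.univ_mem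
  have hcover : A ⊆ P ×ˢ univ ∪ univ ×ˢ Z := fun z hz => by
    by_cases hzZ : z.2 ∈ Z
    · exact Or.inr ⟨trivial, hzZ⟩
    · exact Or.inl ⟨⟨z, ⟨hz, fun h => hzZ h.2⟩, rfl⟩, trivial⟩
  calc μ A ≤ μ (P ×ˢ univ ∪ univ ×ˢ Z) :=
        le_of_subset_of_additive hrect hnonneg hadd hA (hrect.union_mem hP' hZ') hcover
    _ ≤ μ (P ×ˢ univ) + μ (univ ×ˢ Z) := union_le_of_additive hrect hnonneg hadd hP' hZ'
    _ = (μ₁ P).toReal + (μ₂ Z).toReal := by rw [hmarg₁ P hP, hmarg₂ Z hZ]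

lemma image_snd_iInter_of_antitone {X Y : Type*} [TopologicalSpace X] {D : ℕ → Set (X × Y)}
    (hD : Antitone D) (hcompact : ∀ y, IsCompact ((·, y) ⁻¹' D 0))
    (hclosed : ∀ n y, IsClosed ((·, y) ⁻¹' D n)) :
    Prod.snd '' ⋂ n, D n = ⋂ n, Prod.snd '' D n := by
  refine (image_iInter_subset _ _).antisymm fun y (hy : y ∈ ⋂ n, Prod.snd '' D n) => ?_
  have hne : ∀ n, ((·, y) ⁻¹' D n).Nonempty := fun n => by
    obtain ⟨⟨x, _⟩, hx, rfl⟩ := mem_iInter.1 hy n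
    exact ⟨x, hx⟩
  obtain ⟨x, hx⟩ := IsCompact.nonempty_iInter_of_sequence_nonempty_isCompact_isClosed
    (fun n => (·, y) ⁻¹' D n)
    (fun n => preimage_mono (hD n.le_succ)) hne (hcompact y) (hclosed · y)
  exact ⟨(x, y), mem_iInter.2 fun n => mem_iInter.1 hx n, rfl⟩

lemma exists_isCompact_measure_iUnion_sdiff_lt {α ι : Type*} [TopologicalSpace α]
    [MeasurableSpace α] [OpensMeasurableSpace α] [T2Space α] {μ : Measure α} [IsFiniteMeasure μ]
    [μ.InnerRegularCompactLTTop] [Countable ι] {R : ι → Set α} (hR : ∀ i, MeasurableSet (R i))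
    {ε : ENNReal} (hε : ε ≠ 0) :
    ∃ K : ι → Set α, (∀ i, K i ⊆ R i ∧ IsCompact (K i)) ∧ μ (⋃ i, R i \ K i) < ε := by
  obtain ⟨δ, hδpos, hδ⟩ := ENNReal.exists_pos_sum_of_countable' hε ι
  choose K hKR hK hKδ using fun i =>
    (hR i).exists_isCompact_sdiff_lt (measure_ne_top μ _) (hδpos i).ne'
  exact ⟨K, fun i => ⟨hKR i, hK i⟩,
    (measure_iUnion_le _).trans_lt ((ENNReal.tsum_le_tsum fun i => (hKδ i).le).trans_lt hδ)⟩

section RectCore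

variable {X Y : Type*} {m : ℕ → ℕ} (K : ∀ j, Fin (m j) → Set X) (R : ∀ j, Fin (m j) → Set Y)

def rectCore (n : ℕ) : Set (X × Y) :=
  ⋂ j ∈ Finset.Iic n, ⋃ k, K j k ×ˢ R j k

lemma rectCore_antitone : Antitone (rectCore K R) := fun _ _ hab =>
  biInter_subset_biInter_left (Finset.coe_subset.2 (Finset.Iic_subset_Iic.2 hab))

lemma rectCore_subset {R₁ : ∀ j, Fin (m j) → Set X} (hKR : ∀ j k, K j k ⊆ R₁ j k) (n : ℕ) :
    rectCore K R n ⊆ ⋃ k, R₁ n k ×ˢ R n k :=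
  (biInter_subset_of_mem (Finset.mem_Iic.2 le_rfl)).trans
    (iUnion_mono fun k => prod_mono (hKR n k) subset_rfl)

lemma image_fst_sdiff_subset {R₁ : ∀ j, Fin (m j) → Set X} {B : ℕ → Set (X × Y)}
    (hB : Antitone B) (hB_eq : ∀ j, B j = ⋃ k, R₁ j k ×ˢ R j k) (n : ℕ) :
    Prod.fst '' (B n \ univ ×ˢ (Prod.snd '' rectCore K R n)) ⊆ ⋃ j, ⋃ k, R₁ j k \ K j k := by
  rintro _ ⟨⟨x, y⟩, ⟨hxy, hyZ⟩, rfl⟩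
  by_contra hx
  simp only [mem_iUnion, Set.mem_sdiff, not_exists, not_and, not_not] at hx
  refine hyZ ⟨trivial, (x, y), ?_, rfl⟩
  simp only [rectCore, mem_iInter₂, Finset.mem_Iic, mem_iUnion, mem_prod]
  intro j hj
  obtain ⟨k, hxk, hyk⟩ := mem_iUnion.1 (hB_eq j ▸ hB hj hxy)
  exact ⟨k, hx j k hxk, hyk⟩

lemma image_snd_rectCore_mem {ℬ : Set (Set Y)} (hℬ : IsSetAlgebra ℬ) (hR : ∀ j k, R j k ∈ ℬ)
    (n : ℕ) : Prod.snd '' rectCore K R n ∈ ℬ := by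
  have huniv : IsSetAlgebra (univ : Set (Set X)) :=
    ⟨trivial, fun _ _ => trivial, fun _ _ _ _ => trivial⟩
  exact image_snd_mem_of_mem_rectAlg (𝒜 := univ) hℬ <|
    (isSetAlgebra_rectAlg huniv hℬ).biInter_mem _ fun j _ =>
      iUnion_prod_mem_rectAlg fun k => ⟨trivial, hR j k⟩

lemma isCompact_preimage_mk_iUnion_prod [TopologicalSpace X] {ι : Type*} [Finite ι]
    {K : ι → Set X} {R : ι → Set Y} (hK : ∀ i, IsCompact (K i)) (y : Y) :
    IsCompact ((·, y) ⁻¹' ⋃ i, K i ×ˢ R i) := by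
  rw [preimage_iUnion]
  refine isCompact_iUnion fun i => ?_
  by_cases hy : y ∈ R i
  · rw [mk_preimage_prod_left hy]
    exact hK i
  · rw [mk_preimage_prod_left_eq_empty hy]
    exact isCompact_empty

lemma image_snd_iInter_rectCore [TopologicalSpace X] [T2Space X]
    (hK : ∀ j k, IsCompact (K j k)) :
    ⋂ n, Prod.snd '' rectCore K R n = Prod.snd '' ⋂ n, rectCore K R n := by
  refine (image_snd_iInter_of_antitone (rectCore_antitone K R) (fun y => ?_) fun n y => ?_).symm
  · simpa [rectCore] using isCompact_preimage_mk_iUnion_prod (hK 0) y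
  · rw [rectCore, preimage_iInter₂]
    exact isClosed_biInter fun j _ => (isCompact_preimage_mk_iUnion_prod (hK j) y).isClosed

lemma tendsto_measure_image_snd_rectCore [TopologicalSpace X] [T2Space X] [MeasurableSpace Y]
    (μ : Measure Y) [IsFiniteMeasure μ] {R₁ : ∀ j, Fin (m j) → Set X}
    (hK : ∀ j k, IsCompact (K j k)) (hKR : ∀ j k, K j k ⊆ R₁ j k)
    (hR : ∀ j k, MeasurableSet (R j k)) (hempty : ⋂ n, ⋃ k, R₁ n k ×ˢ R n k = ∅) :
    Tendsto (fun n => μ (Prod.snd '' rectCore K R n)) atTop (𝓝 0) := by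
  have hmeas : IsSetAlgebra {s : Set Y | MeasurableSet s} :=
    ⟨MeasurableSet.empty, fun _ hs => hs.compl, fun _ _ hs ht => hs.union ht⟩
  have h := tendsto_measure_iInter_atTop (μ := μ)
    (fun n => (image_snd_rectCore_mem K R hmeas hR n).nullMeasurableSet)
    (fun _ _ hab => image_mono (rectCore_antitone K R hab)) ⟨0, measure_ne_top _ _⟩
  have hcore : ⋂ n, rectCore K R n = ∅ :=
    eq_empty_of_subset_empty (hempty ▸ iInter_mono (rectCore_subset K R hKR))
  rwa [image_snd_iInter_rectCore K R hK, hcore, image_empty, measure_empty] at h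

end RectCore

theorem rectAlg_finitelyAdditive_tendsto_zero_general
    {S₁ S₂ : Type*} [TopologicalSpace S₁] [T2Space S₁]
    [MeasurableSpace S₁] [BorelSpace S₁] [MeasurableSpace S₂]
    (μ₁ : Measure S₁) [IsProbabilityMeasure μ₁]
    (hreg : μ₁.InnerRegularWRT IsCompact MeasurableSet)
    (μ₂ : Measure S₂) [IsProbabilityMeasure μ₂]
    (𝔅₁ : Set (Set S₁)) (𝔅₂ : Set (Set S₂))
    (halg₁ : IsSetAlg 𝔅₁) (halg₂ : IsSetAlg 𝔅₂)
    (hmeas₁ : ∀ B ∈ 𝔅₁, MeasurableSet B) (hmeas₂ : ∀ B ∈ 𝔅₂, MeasurableSet B)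
    (μ : Set (S₁ × S₂) → ℝ)
    (hnonneg : ∀ B ∈ RectAlg 𝔅₁ 𝔅₂, 0 ≤ μ B)
    (hadd : ∀ A ∈ RectAlg 𝔅₁ 𝔅₂, ∀ B ∈ RectAlg 𝔅₁ 𝔅₂, Disjoint A B →
      μ (A ∪ B) = μ A + μ B)
    (hmarg₁ : ∀ B₁ ∈ 𝔅₁, μ (B₁ ×ˢ (Set.univ : Set S₂)) = (μ₁ B₁).toReal)
    (hmarg₂ : ∀ B₂ ∈ 𝔅₂, μ ((Set.univ : Set S₁) ×ˢ B₂) = (μ₂ B₂).toReal) :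
    ∀ B : ℕ → Set (S₁ × S₂), (∀ i, B i ∈ RectAlg 𝔅₁ 𝔅₂) → Antitone B →
      (⋂ i, B i) = ∅ →
      Filter.Tendsto (fun i => μ (B i)) Filter.atTop (nhds 0) := by
  intro B hB hB_anti hB_empty
  have : μ₁.InnerRegular := ⟨hreg⟩
  refine tendsto_order.2 ⟨fun a ha => Eventually.of_forall fun n => ha.trans_le (hnonneg _ (hB n)),
    fun ε hε => ?_⟩
  choose m R₁ R₂ hR hB_eq using hB
  obtain ⟨K, hK, hE⟩ := exists_isCompact_measure_iUnion_sdiff_lt (μ := μ₁)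
    (R := fun p : Σ j, Fin (m j) => R₁ p.1 p.2) (fun p => hmeas₁ _ (hR p.1 p.2).1)
    (ENNReal.ofReal_pos.2 (half_pos hε)).ne'
  rw [iUnion_sigma] at hE
  set Z := fun n => Prod.snd '' rectCore (fun j k => K ⟨j, k⟩) R₂ n
  have hZ : ∀ n, Z n ∈ 𝔅₂ := image_snd_rectCore_mem _ _ halg₂.isSetAlgebra fun j k => (hR j k).2
  have hZ_lim : Tendsto (fun n => (μ₂ (Z n)).toReal) atTop (𝓝 0) :=
    (ENNReal.tendsto_toReal ENNReal.zero_ne_top).comp <| tendsto_measure_image_snd_rectCore _ _ μ₂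
      (fun j k => (hK ⟨j, k⟩).2) (fun j k => (hK ⟨j, k⟩).1) (fun j k => hmeas₂ _ (hR j k).2)
      (by simpa only [hB_eq] using hB_empty)
  filter_upwards [(tendsto_order.1 hZ_lim).2 (ε / 2) (half_pos hε)] with n hn
  calc μ (B n) ≤ (μ₁ (Prod.fst '' (B n \ univ ×ˢ Z n))).toReal + (μ₂ (Z n)).toReal :=
        le_measure_image_fst_add_measure halg₁.isSetAlgebra halg₂.isSetAlgebra hnonneg hadd
          hmarg₁ hmarg₂ (hB_eq n ▸ iUnion_prod_mem_rectAlg (hR n)) (hZ n)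
    _ ≤ (μ₁ (⋃ j, ⋃ k, R₁ j k \ K ⟨j, k⟩)).toReal + (μ₂ (Z n)).toReal := by
        gcongr
        exacts [measure_ne_top _ _, image_fst_sdiff_subset _ _ hB_anti hB_eq n]
    _ < ε / 2 + ε / 2 := add_lt_add_of_lt_of_le (ENNReal.toReal_lt_of_lt_ofReal hE) hn.le
    _ = ε := add_halves ε

/-- Continuity at `∅` of a finitely additive measure on the rectangle algebra whose
first marginal is a Radon probability measure: along any decreasing sequence with
empty intersection the measure tends to `0`. -/
theorem rectAlg_finitelyAdditive_tendsto_zero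
    {S₁ S₂ : Type*} [TopologicalSpace S₁] [T2Space S₁]
    [MeasurableSpace S₁] [BorelSpace S₁] [MeasurableSpace S₂]
    (μ₁ : Measure S₁) [IsProbabilityMeasure μ₁]
    (hreg : μ₁.InnerRegularWRT IsCompact MeasurableSet)
    (μ₂ : Measure S₂) [IsProbabilityMeasure μ₂]
    (𝔅₁ : Set (Set S₁)) (𝔅₂ : Set (Set S₂))
    (halg₁ : IsSetAlg 𝔅₁) (halg₂ : IsSetAlg 𝔅₂)
    (hmeas₁ : ∀ B ∈ 𝔅₁, MeasurableSet B) (hmeas₂ : ∀ B ∈ 𝔅₂, MeasurableSet B)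
    (μ : Set (S₁ × S₂) → ℝ)
    (hnonneg : ∀ B ∈ RectAlg 𝔅₁ 𝔅₂, 0 ≤ μ B)
    (hempty : μ ∅ = 0)
    (hadd : ∀ A ∈ RectAlg 𝔅₁ 𝔅₂, ∀ B ∈ RectAlg 𝔅₁ 𝔅₂, Disjoint A B →
      μ (A ∪ B) = μ A + μ B)
    (hmarg₁ : ∀ B₁ ∈ 𝔅₁, μ (B₁ ×ˢ (Set.univ : Set S₂)) = (μ₁ B₁).toReal)
    (hmarg₂ : ∀ B₂ ∈ 𝔅₂, μ ((Set.univ : Set S₁) ×ˢ B₂) = (μ₂ B₂).toReal) :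
    ∀ B : ℕ → Set (S₁ × S₂), (∀ i, B i ∈ RectAlg 𝔅₁ 𝔅₂) → Antitone B →
      (⋂ i, B i) = ∅ →
      Filter.Tendsto (fun i => μ (B i)) Filter.atTop (nhds 0) :=
  rectAlg_finitelyAdditive_tendsto_zero_general μ₁ hreg μ₂ 𝔅₁ 𝔅₂ halg₁ halg₂ hmeas₁ hmeas₂ μ hnonneg
    hadd hmarg₁ hmarg₂
end

section
/- Let S₀ be a separable metric space with Borel σ-algebra, S₁, S₂ measurable spaces, h_j : S_j → S₀ measurable (j = 1, 2), and let μ be a probability measure on the product σ-algebra of S₁ × S₂ such that for every Borel set B₀ ⊆ S₀, μ(h₁⁻¹(B₀) × h₂⁻¹(S₀ \ B₀)) = 0. Then μ(S₃) = 1, where S₃ = { (x₁, x₂) : h₁(x₁) = h₂(x₂) }. -/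
open MeasureTheory

/-- If a probability measure on `S₁ × S₂` vanishes on every rectangle
`h₁ ⁻¹ B₀ × h₂ ⁻¹ (S₀ \ B₀)` with `B₀` Borel, then it gives full measure to the set
pullback `{ (x₁, x₂) : h₁ x₁ = h₂ x₂ }`. -/
theorem measure_pullback_eq_one
    {S₀ S₁ S₂ : Type*}
    [MetricSpace S₀] [TopologicalSpace.SeparableSpace S₀]
    [MeasurableSpace S₀] [BorelSpace S₀]
    [MeasurableSpace S₁] [MeasurableSpace S₂]
    (h₁ : S₁ → S₀) (h₂ : S₂ → S₀) (hm₁ : Measurable h₁) (hm₂ : Measurable h₂)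
    (μ : Measure (S₁ × S₂)) [IsProbabilityMeasure μ]
    (hnull : ∀ B₀ : Set S₀, MeasurableSet B₀ →
      μ ((h₁ ⁻¹' B₀) ×ˢ (h₂ ⁻¹' B₀ᶜ)) = 0) :
    μ { p : S₁ × S₂ | h₁ p.1 = h₂ p.2 } = 1 := by
  haveI : SecondCountableTopology S₀ := UniformSpace.secondCountable_of_separable S₀
  obtain ⟨b, hbc, -, hb⟩ := TopologicalSpace.exists_countable_basis S₀
  have hsub : {p : S₁ × S₂ | h₁ p.1 = h₂ p.2}ᶜ ⊆
      ⋃ U ∈ b, (h₁ ⁻¹' U) ×ˢ (h₂ ⁻¹' Uᶜ) := by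
    intro p hp
    have hne : h₁ p.1 ≠ h₂ p.2 := hp
    obtain ⟨U, hUb, hxU, hUsub⟩ := hb.exists_subset_of_mem_open
      (show h₁ p.1 ∈ ({h₂ p.2}ᶜ : Set S₀) from hne) isOpen_compl_singleton
    exact Set.mem_biUnion hUb ⟨hxU, fun h => hUsub h rfl⟩
  have h0 : μ ({p : S₁ × S₂ | h₁ p.1 = h₂ p.2}ᶜ) = 0 := by
    refine measure_mono_null hsub ?_
    refine (measure_biUnion_null_iff hbc).2 fun U hU => ?_
    exact hnull U (hb.isOpen hU).measurableSet
  have hmeas : MeasurableSet {p : S₁ × S₂ | h₁ p.1 = h₂ p.2} :=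
    (hm₁.comp measurable_fst).stronglyMeasurable.measurableSet_eq_fun
      (hm₂.comp measurable_snd).stronglyMeasurable
  exact (prob_compl_eq_zero_iff hmeas).1 h0
end

section
/- Let Σ be the countable-cocountable σ-algebra on an uncountable set S and V ⊆ S a set such that both V and S \ V are uncountable. Then the σ-algebra Σ_V generated by Σ ∪ {V} consists exactly of the sets Q ⊆ S such that Q ∩ V is countable or co-countable in V, and Q \ V is countable or co-countable in S \ V. -/
/-- Characterization of the σ-algebra generated by the countable-cocountable
σ-algebra together with one extra set `V` (with `V` and `Vᶜ` uncountable):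
a set `Q` belongs to it iff `Q ∩ V` is countable or co-countable in `V`, and
`Q \ V` is countable or co-countable in `S \ V`. -/
theorem generateFrom_countableCocountable_union_singleton
    {S : Type*} (V : Set S)
    (hV : ¬ V.Countable) (hVc : ¬ Vᶜ.Countable)
    (Q : Set S) :
    @MeasurableSet S (MeasurableSpace.generateFrom
        ({ A : Set S | A.Countable ∨ Aᶜ.Countable } ∪ {V})) Q ↔
      ((Q ∩ V).Countable ∨ (V \ Q).Countable) ∧
      ((Q \ V).Countable ∨ (Vᶜ \ Q).Countable) := by
  constructor
  · intro h
    induction h with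
    | basic A hA =>
      rcases hA with (hA | hA) | hA
      · exact ⟨Or.inl (hA.mono Set.inter_subset_left),
          Or.inl (hA.mono Set.diff_subset)⟩
      · refine ⟨Or.inr (hA.mono ?_), Or.inr (hA.mono ?_)⟩ <;> (rintro x ⟨_, hx2⟩; exact hx2)
      · simp only [Set.mem_singleton_iff] at hA
        subst hA
        exact ⟨Or.inr (by simp), Or.inl (by simp)⟩
    | empty => exact ⟨Or.inl (by simp), Or.inl (by simp)⟩
    | compl A _ ih =>
      obtain ⟨h1, h2⟩ := ih
      constructor
      · rcases h1 with h1 | h1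
        · refine Or.inr (h1.mono ?_); rintro x ⟨hx1, hx2⟩; exact ⟨not_not.mp hx2, hx1⟩
        · refine Or.inl (h1.mono ?_); rintro x ⟨hx1, hx2⟩; exact ⟨hx2, hx1⟩
      · rcases h2 with h2 | h2
        · refine Or.inr (h2.mono ?_); rintro x ⟨hx1, hx2⟩; exact ⟨not_not.mp hx2, hx1⟩
        · refine Or.inl (h2.mono ?_); rintro x ⟨hx1, hx2⟩; exact ⟨hx2, hx1⟩
    | iUnion f _ ih =>
      constructor
      · by_cases hall : ∀ n, (f n ∩ V).Countable
        · refine Or.inl ((Set.countable_iUnion hall).mono ?_)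
          rintro x ⟨hx, hxV⟩
          obtain ⟨n, hn⟩ := Set.mem_iUnion.mp hx
          exact Set.mem_iUnion.mpr ⟨n, hn, hxV⟩
        · push_neg at hall
          obtain ⟨n, hn⟩ := hall
          rcases (ih n).1 with h | h
          · exact absurd h hn
          · refine Or.inr (h.mono ?_)
            rintro x ⟨hx1, hx2⟩
            exact ⟨hx1, fun hxn => hx2 (Set.mem_iUnion.mpr ⟨n, hxn⟩)⟩
      · by_cases hall : ∀ n, (f n \ V).Countable
        · refine Or.inl ((Set.countable_iUnion hall).mono ?_)
          rintro x ⟨hx, hxV⟩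
          obtain ⟨n, hn⟩ := Set.mem_iUnion.mp hx
          exact Set.mem_iUnion.mpr ⟨n, hn, hxV⟩
        · push_neg at hall
          obtain ⟨n, hn⟩ := hall
          rcases (ih n).2 with h | h
          · exact absurd h hn
          · refine Or.inr (h.mono ?_)
            rintro x ⟨hx1, hx2⟩
            exact ⟨hx1, fun hxn => hx2 (Set.mem_iUnion.mpr ⟨n, hxn⟩)⟩
  · rintro ⟨h1, h2⟩
    have hVmeas : @MeasurableSet S (MeasurableSpace.generateFrom
        ({ A : Set S | A.Countable ∨ Aᶜ.Countable } ∪ {V})) V :=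
      MeasurableSpace.measurableSet_generateFrom (Or.inr rfl)
    have hcnt : ∀ A : Set S, A.Countable → @MeasurableSet S (MeasurableSpace.generateFrom
        ({ A : Set S | A.Countable ∨ Aᶜ.Countable } ∪ {V})) A :=
      fun A hA => MeasurableSpace.measurableSet_generateFrom (Or.inl (Or.inl hA))
    have hQ : Q = (Q ∩ V) ∪ (Q \ V) := by
      ext x; by_cases hx : x ∈ V <;> simp [hx]
    rw [hQ]
    apply MeasurableSet.union
    · rcases h1 with h1 | h1
      · exact hcnt _ h1
      · have : Q ∩ V = V \ (V \ Q) := by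
          ext x; constructor
          · rintro ⟨hQ, hV⟩; exact ⟨hV, fun h => h.2 hQ⟩
          · rintro ⟨hV, h⟩
            exact ⟨by_contra fun hq => h ⟨hV, hq⟩, hV⟩
        rw [this]
        exact MeasurableSet.diff hVmeas (hcnt _ h1)
    · rcases h2 with h2 | h2
      · exact hcnt _ h2
      · have : Q \ V = Vᶜ \ (Vᶜ \ Q) := by
          ext x; constructor
          · rintro ⟨hQ, hV⟩; exact ⟨hV, fun h => h.2 hQ⟩
          · rintro ⟨hV, h⟩
            exact ⟨by_contra fun hq => h ⟨hV, hq⟩, hV⟩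
        rw [this]
        exact MeasurableSet.diff (MeasurableSet.compl hVmeas) (hcnt _ h2)
end
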